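/- arXiv:1611.06724 — 7 statements merged into one kernel-verified Lean document; each statement's English description precedes it below -/
import Mathlib

section
/- If p ≥ q, a_1,…,a_p > 0, b_1,…,b_q > 0, and the chain of inequalities e_p(a)/e_q(b) ≤ e_{p-1}(a)/e_{q-1}(b) ≤ … ≤ e_{p-q+1}(a)/e_1(b) ≤ e_{p-q}(a) holds (where e_m denotes the m-th elementary symmetric polynomial), then the rational function R(x) = ∏_{k=1}^{p}(a_k + x) / ∏_{k=1}^{q}(b_k + x) is monotone increasing on (0, ∞). -/
open Finset

/-- The `m`-th elementary symmetric polynomial of `a 0, …, a (p-1)`. -/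
noncomputable def esymm (p : ℕ) (a : ℕ → ℝ) (m : ℕ) : ℝ :=
  ∑ s ∈ (Finset.range p).powersetCard m, ∏ i ∈ s, a i

lemma esymm_expand (n : ℕ) (c : ℕ → ℝ) (x : ℝ) :
    ∏ k ∈ Finset.range n, (c k + x) =
      ∑ m ∈ Finset.range (n + 1), esymm n c m * x ^ (n - m) := by
  rw [Finset.prod_add, Finset.sum_powerset]
  simp only [Finset.card_range]
  refine Finset.sum_congr rfl fun m _ => ?_
  rw [esymm, Finset.sum_mul]
  refine Finset.sum_congr rfl fun s hs => ?_
  rw [Finset.mem_powersetCard] at hs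
  rw [Finset.prod_const]
  congr 1
  rw [Finset.card_sdiff_of_subset hs.1, Finset.card_range, hs.2]

lemma esymm_pos {n m : ℕ} {c : ℕ → ℝ} (hc : ∀ k < n, 0 < c k) (hm : m ≤ n) :
    0 < esymm n c m := by
  apply Finset.sum_pos
  · intro s hs
    rw [Finset.mem_powersetCard] at hs
    exact Finset.prod_pos fun i hi => hc i (Finset.mem_range.mp (hs.1 hi))
  · exact Finset.powersetCard_nonempty.2 (by simpa using hm)

lemma pow_cross {x y : ℝ} (hx : 0 < x) (hxy : x ≤ y) {e2 e1 : ℕ} (h : e2 ≤ e1) :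
    x ^ e1 * y ^ e2 ≤ y ^ e1 * x ^ e2 := by
  obtain ⟨k, rfl⟩ := Nat.exists_eq_add_of_le h
  have hy : 0 < y := hx.trans_le hxy
  have h1 : x ^ k ≤ y ^ k := pow_le_pow_left₀ hx.le hxy k
  have h2 : x ^ e2 * y ^ e2 * x ^ k ≤ x ^ e2 * y ^ e2 * y ^ k :=
    mul_le_mul_of_nonneg_left h1 (by positivity)
  calc x ^ (e2 + k) * y ^ e2 = x ^ e2 * y ^ e2 * x ^ k := by rw [pow_add]; ring
    _ ≤ x ^ e2 * y ^ e2 * y ^ k := h2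
    _ = y ^ (e2 + k) * x ^ e2 := by rw [pow_add]; ring

theorem stmt_0 (p q : ℕ) (hpq : q ≤ p) (a b : ℕ → ℝ)
    (ha : ∀ k < p, 0 < a k) (hb : ∀ k < q, 0 < b k)
    (hchain : ∀ j, 1 ≤ j → j ≤ q →
      esymm p a (p - q + j) / esymm q b j ≤ esymm p a (p - q + j - 1) / esymm q b (j - 1)) :
    MonotoneOn (fun x : ℝ =>
      (∏ k ∈ Finset.range p, (a k + x)) / (∏ k ∈ Finset.range q, (b k + x)))
      (Set.Ioi (0 : ℝ)) := by
  set d := p - q with hd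
  set A : ℕ → ℝ := fun m => esymm p a m with hA
  set B : ℕ → ℝ := fun n => esymm q b n with hB
  have hApos : ∀ m ≤ p, 0 < A m := fun m hm => esymm_pos ha hm
  have hBpos : ∀ n ≤ q, 0 < B n := fun n hn => esymm_pos hb hn
  -- antitone ratio
  have hratio : ∀ j ≤ q, ∀ i ≤ j, A (d + j) / B j ≤ A (d + i) / B i := by
    intro j
    induction j with
    | zero => intro _ i hi; interval_cases i; exact le_refl _
    | succ j ih =>
      intro hjq i hi
      rcases Nat.lt_or_ge i (j + 1) with hij | hij
      · have hstep : A (d + (j + 1)) / B (j + 1) ≤ A (d + j) / B j := by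
          have := hchain (j + 1) (by omega) hjq
          have e1 : p - q + (j + 1) - 1 = d + j := by omega
          have e2 : j + 1 - 1 = j := by omega
          rw [e1, e2] at this
          exact this
        exact hstep.trans (ih (by omega) i (by omega))
      · have : i = j + 1 := by omega
        subst this; exact le_refl _
  have hcross : ∀ j ≤ q, ∀ i ≤ j, A (d + j) * B i ≤ A (d + i) * B j := by
    intro j hj i hi
    have := hratio j hj i hi
    rw [div_le_div_iff₀ (hBpos j hj) (hBpos i (hi.trans hj))] at this
    linarith [this]
  intro x hx y hy hxy
  simp only [Set.mem_Ioi] at hx hy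
  have hy0 : 0 < y := hx.trans_le hxy
  have hDx : 0 < ∏ k ∈ Finset.range q, (b k + x) := by
    refine Finset.prod_pos fun k hk => ?_
    have := hb k (Finset.mem_range.mp hk); linarith
  have hDy : 0 < ∏ k ∈ Finset.range q, (b k + y) := by
    refine Finset.prod_pos fun k hk => ?_
    have := hb k (Finset.mem_range.mp hk); linarith
  simp only
  rw [div_le_div_iff₀ hDx hDy]
  rw [esymm_expand p a x, esymm_expand p a y, esymm_expand q b x, esymm_expand q b y]
  rw [← sub_nonneg]
  set F : ℕ → ℕ → ℝ := fun m n =>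
    A m * B n * (y ^ (p - m) * x ^ (q - n) - x ^ (p - m) * y ^ (q - n)) with hF
  have hgoal :
      (∑ m ∈ Finset.range (p + 1), A m * y ^ (p - m)) *
          ∑ n ∈ Finset.range (q + 1), B n * x ^ (q - n) -
        (∑ m ∈ Finset.range (p + 1), A m * x ^ (p - m)) *
          ∑ n ∈ Finset.range (q + 1), B n * y ^ (q - n) =
      ∑ m ∈ Finset.range (p + 1), ∑ n ∈ Finset.range (q + 1), F m n := by
    rw [Finset.sum_mul_sum, Finset.sum_mul_sum, ← Finset.sum_sub_distrib]
    refine Finset.sum_congr rfl fun m _ => ?_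
    rw [← Finset.sum_sub_distrib]
    refine Finset.sum_congr rfl fun n _ => ?_
    simp only [hF]; ring
  rw [hgoal]
  have hsplit : p + 1 = d + (q + 1) := by omega
  rw [hsplit, Finset.sum_range_add]
  have part1 : 0 ≤ ∑ m ∈ Finset.range d, ∑ n ∈ Finset.range (q + 1), F m n := by
    refine Finset.sum_nonneg fun m hm => Finset.sum_nonneg fun n hn => ?_
    rw [Finset.mem_range] at hm hn
    have hAm : 0 ≤ A m := (hApos m (by omega)).le
    have hBn : 0 ≤ B n := (hBpos n (by omega)).le
    have hpow : x ^ (p - m) * y ^ (q - n) ≤ y ^ (p - m) * x ^ (q - n) :=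
      pow_cross hx hxy (by omega)
    simp only [hF]
    have : 0 ≤ y ^ (p - m) * x ^ (q - n) - x ^ (p - m) * y ^ (q - n) := by linarith
    exact mul_nonneg (mul_nonneg hAm hBn) this
  have part2 : 0 ≤ ∑ j ∈ Finset.range (q + 1), ∑ n ∈ Finset.range (q + 1), F (d + j) n := by
    set S : ℝ := ∑ j ∈ Finset.range (q + 1), ∑ n ∈ Finset.range (q + 1), F (d + j) n with hS
    have h2 : 2 * S = ∑ j ∈ Finset.range (q + 1), ∑ n ∈ Finset.range (q + 1),
        (F (d + j) n + F (d + n) j) := by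
      have hc : S = ∑ j ∈ Finset.range (q + 1), ∑ n ∈ Finset.range (q + 1), F (d + n) j := by
        rw [hS]; exact Finset.sum_comm
      rw [two_mul]
      nth_rewrite 2 [hc]
      rw [← Finset.sum_add_distrib]
      refine Finset.sum_congr rfl fun j _ => ?_
      rw [← Finset.sum_add_distrib]
    have hterm : ∀ j ∈ Finset.range (q + 1), ∀ n ∈ Finset.range (q + 1),
        0 ≤ F (d + j) n + F (d + n) j := by
      intro j hj n hn
      rw [Finset.mem_range] at hj hn
      have ej : p - (d + j) = q - j := by omega
      have en : p - (d + n) = q - n := by omega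
      have hcomb : F (d + j) n + F (d + n) j =
          (A (d + j) * B n - A (d + n) * B j) *
            (y ^ (q - j) * x ^ (q - n) - x ^ (q - j) * y ^ (q - n)) := by
        simp only [hF, ej, en]; ring
      rw [hcomb]
      rcases le_or_gt j n with hjn | hjn
      · have h1 : 0 ≤ A (d + j) * B n - A (d + n) * B j := by
          have := hcross n (by omega) j hjn; linarith
        have h2 : 0 ≤ y ^ (q - j) * x ^ (q - n) - x ^ (q - j) * y ^ (q - n) := by
          have := pow_cross hx hxy (show q - n ≤ q - j by omega); linarith
        exact mul_nonneg h1 h2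
      · have h1 : A (d + j) * B n - A (d + n) * B j ≤ 0 := by
          have := hcross j (by omega) n (by omega); linarith
        have h2 : y ^ (q - j) * x ^ (q - n) - x ^ (q - j) * y ^ (q - n) ≤ 0 := by
          have := pow_cross hx hxy (show q - j ≤ q - n by omega); linarith
        nlinarith [mul_nonneg (neg_nonneg.mpr h1) (neg_nonneg.mpr h2)]
    have : 0 ≤ 2 * S := by
      rw [h2]
      exact Finset.sum_nonneg fun j hj => Finset.sum_nonneg fun n hn => hterm j hj n hn
    linarith
  exact add_nonneg part1 part2
end

section
/- If p ≤ q, a_1,…,a_p > 0, b_1,…,b_q > 0, and the chain of inequalities e_q(b)/e_p(a) ≤ e_{q-1}(b)/e_{p-1}(a) ≤ … ≤ e_{q-p+1}(b)/e_1(a) ≤ e_{q-p}(b) holds, then the rational function R(x) = ∏_{k=1}^{p}(a_k + x) / ∏_{k=1}^{q}(b_k + x) is monotone decreasing on (0, ∞). -/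
open Finset

lemma esymm_nonneg (p : ℕ) (a : ℕ → ℝ) (ha : ∀ k < p, 0 < a k) (m : ℕ) :
    0 ≤ esymm p a m := by
  refine Finset.sum_nonneg fun s hs => Finset.prod_nonneg fun i hi => ?_
  rw [Finset.mem_powersetCard] at hs
  exact (ha i (Finset.mem_range.mp (hs.1 hi))).le

lemma esymm_pos_s1 (p : ℕ) (a : ℕ → ℝ) (ha : ∀ k < p, 0 < a k) {m : ℕ} (hm : m ≤ p) :
    0 < esymm p a m := by
  obtain ⟨t, ht, hcard⟩ := Finset.exists_subset_card_eq
    (show m ≤ (Finset.range p).card by simpa using hm)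
  refine Finset.sum_pos (fun s hs => ?_) ⟨t, Finset.mem_powersetCard.mpr ⟨ht, hcard⟩⟩
  rw [Finset.mem_powersetCard] at hs
  exact Finset.prod_pos fun i hi => ha i (Finset.mem_range.mp (hs.1 hi))

lemma prod_add_expand (n : ℕ) (c : ℕ → ℝ) (x : ℝ) :
    ∏ k ∈ Finset.range n, (c k + x) = ∑ m ∈ Finset.range (n+1), esymm n c m * x ^ (n - m) := by
  rw [Finset.prod_add, Finset.sum_powerset]
  simp only [Finset.card_range]
  refine Finset.sum_congr rfl fun m hm => ?_
  rw [esymm, Finset.sum_mul]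
  refine Finset.sum_congr rfl fun s hs => ?_
  rw [Finset.mem_powersetCard] at hs
  rw [Finset.prod_const, Finset.card_sdiff_of_subset hs.1, Finset.card_range, hs.2]

theorem stmt_1 (p q : ℕ) (hpq : p ≤ q) (a b : ℕ → ℝ)
    (ha : ∀ k < p, 0 < a k) (hb : ∀ k < q, 0 < b k)
    (hchain : ∀ j, 1 ≤ j → j ≤ p →
      esymm q b (q - p + j) / esymm p a j ≤ esymm q b (q - p + j - 1) / esymm p a (j - 1)) :
    AntitoneOn (fun x : ℝ =>
      (∏ k ∈ Finset.range p, (a k + x)) / (∏ k ∈ Finset.range q, (b k + x)))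
      (Set.Ioi (0 : ℝ)) := by
  set A : ℕ → ℝ := fun j => if j ≤ p then esymm p a (p - j) else 0 with hA
  set B : ℕ → ℝ := fun m => esymm q b (q - m) with hB
  have hApos : ∀ j, j ≤ p → 0 < A j := by
    intro j hj
    rw [hA]; simp only; rw [if_pos hj]
    exact esymm_pos_s1 p a ha (Nat.sub_le p j)
  have hAnn : ∀ j, 0 ≤ A j := by
    intro j
    rw [hA]; simp only
    split
    · exact esymm_nonneg p a ha _
    · exact le_refl 0
  have hBpos : ∀ m, 0 < B m := fun m => esymm_pos_s1 q b hb (Nat.sub_le q m)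
  -- ratio monotonicity step
  have step : ∀ i, i < p → B i / A i ≤ B (i + 1) / A (i + 1) := by
    intro i hi
    have h := hchain (p - i) (by omega) (by omega)
    have e1 : q - p + (p - i) = q - i := by omega
    have e2 : q - i - 1 = q - (i + 1) := by omega
    have e3 : p - i - 1 = p - (i + 1) := by omega
    rw [e1, e2, e3] at h
    have hAi : A i = esymm p a (p - i) := by rw [hA]; simp only; rw [if_pos hi.le]
    have hAi1 : A (i + 1) = esymm p a (p - (i + 1)) := by
      rw [hA]; simp only; rw [if_pos (by omega : i + 1 ≤ p)]
    rw [hAi, hAi1, hB]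
    exact h
  have mono : ∀ m, m ≤ p → ∀ j, j ≤ m → B j / A j ≤ B m / A m := by
    intro m
    induction m with
    | zero => intro _ j hj; simp [Nat.le_zero.mp hj]
    | succ n ih =>
      intro hm j hj
      rcases Nat.lt_succ_iff_lt_or_eq.mp (Nat.lt_succ_of_le hj) with h | h
      · exact le_trans (ih (by omega) j (by omega)) (step n (by omega))
      · rw [h]
  have cross : ∀ j m, j ≤ m → m ≤ q → A m * B j ≤ A j * B m := by
    intro j m hjm hmq
    by_cases hmp : m ≤ p
    · have h := mono m hmp j hjm
      rw [div_le_div_iff₀ (hApos j (le_trans hjm hmp)) (hApos m hmp)] at h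
      linarith
    · have hAm : A m = 0 := by rw [hA]; simp only; rw [if_neg hmp]
      rw [hAm, zero_mul]
      exact mul_nonneg (hAnn j) (hBpos m).le
  intro x hx y hy hxy
  simp only
  have hx0 : (0 : ℝ) < x := hx
  have hy0 : (0 : ℝ) < y := hy
  have hQx : 0 < ∏ k ∈ Finset.range q, (b k + x) :=
    Finset.prod_pos fun k hk => add_pos (hb k (Finset.mem_range.mp hk)) hx0
  have hQy : 0 < ∏ k ∈ Finset.range q, (b k + y) :=
    Finset.prod_pos fun k hk => add_pos (hb k (Finset.mem_range.mp hk)) hy0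
  rw [div_le_div_iff₀ hQy hQx]
  -- expansions
  have hP : ∀ z : ℝ, ∏ k ∈ Finset.range p, (a k + z)
      = ∑ j ∈ Finset.range (q + 1), A j * z ^ j := by
    intro z
    rw [prod_add_expand,
      ← Finset.sum_range_reflect (fun m => esymm p a m * z ^ (p - m)) (p + 1)]
    have h1 : ∑ j ∈ Finset.range (p + 1), esymm p a (p + 1 - 1 - j) * z ^ (p - (p + 1 - 1 - j))
        = ∑ j ∈ Finset.range (p + 1), A j * z ^ j := by
      refine Finset.sum_congr rfl fun j hj => ?_
      rw [Finset.mem_range] at hj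
      have hj' : j ≤ p := by omega
      have e1 : p + 1 - 1 - j = p - j := by omega
      have e2 : p - (p - j) = j := by omega
      rw [e1, e2, hA]; simp only; rw [if_pos hj']
    rw [h1]
    refine Finset.sum_subset ?_ ?_
    · intro t ht
      rw [Finset.mem_range] at *
      omega
    · intro t ht hnt
      rw [Finset.mem_range] at ht hnt
      have h : ¬ t ≤ p := by omega
      rw [hA]; simp only; rw [if_neg h, zero_mul]
  have hQ : ∀ z : ℝ, ∏ k ∈ Finset.range q, (b k + z)
      = ∑ m ∈ Finset.range (q + 1), B m * z ^ m := by
    intro z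
    rw [prod_add_expand,
      ← Finset.sum_range_reflect (fun m => esymm q b m * z ^ (q - m)) (q + 1)]
    refine Finset.sum_congr rfl fun m hm => ?_
    rw [Finset.mem_range] at hm
    have e1 : q + 1 - 1 - m = q - m := by omega
    have e2 : q - (q - m) = m := by omega
    rw [e1, e2, hB]
  rw [hP x, hP y, hQ x, hQ y]
  -- reduce to nonnegativity of a double sum
  set s := Finset.range (q + 1) with hs
  have hhalf : ∀ j m, j ≤ m → m ≤ q →
      0 ≤ (A j * x ^ j * (B m * y ^ m) - A j * y ^ j * (B m * x ^ m))
        + (A m * x ^ m * (B j * y ^ j) - A m * y ^ m * (B j * x ^ j)) := by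
    intro j m hjm hmq
    have hc := cross j m hjm hmq
    have hxp : y ^ j * x ^ m ≤ x ^ j * y ^ m := by
      have e1 : x ^ m = x ^ j * x ^ (m - j) := by rw [← pow_add]; congr 1; omega
      have e2 : y ^ m = y ^ j * y ^ (m - j) := by rw [← pow_add]; congr 1; omega
      calc y ^ j * x ^ m = x ^ j * y ^ j * x ^ (m - j) := by rw [e1]; ring
        _ ≤ x ^ j * y ^ j * y ^ (m - j) := by
            exact mul_le_mul_of_nonneg_left (pow_le_pow_left₀ hx0.le hxy _) (by positivity)
        _ = x ^ j * y ^ m := by rw [e2]; ring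
    have expand : (A j * x ^ j * (B m * y ^ m) - A j * y ^ j * (B m * x ^ m))
        + (A m * x ^ m * (B j * y ^ j) - A m * y ^ m * (B j * x ^ j))
        = (A j * B m - A m * B j) * (x ^ j * y ^ m - y ^ j * x ^ m) := by ring
    rw [expand]
    exact mul_nonneg (by linarith) (by linarith)
  have hpair : ∀ j ∈ s, ∀ m ∈ s,
      0 ≤ (A j * x ^ j * (B m * y ^ m) - A j * y ^ j * (B m * x ^ m))
        + (A m * x ^ m * (B j * y ^ j) - A m * y ^ m * (B j * x ^ j)) := by
    intro j hj m hm
    rw [hs, Finset.mem_range] at hj hm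
    rcases le_total j m with h | h
    · exact hhalf j m h (by omega)
    · rw [add_comm]; exact hhalf m j h (by omega)
  have hsum : 0 ≤ ∑ j ∈ s, ∑ m ∈ s,
      ((A j * x ^ j * (B m * y ^ m) - A j * y ^ j * (B m * x ^ m))
        + (A m * x ^ m * (B j * y ^ j) - A m * y ^ m * (B j * x ^ j))) := by
    exact Finset.sum_nonneg fun j hj => Finset.sum_nonneg fun m hm => hpair j hj m hm
  have hsplit : ∑ j ∈ s, ∑ m ∈ s,
      ((A j * x ^ j * (B m * y ^ m) - A j * y ^ j * (B m * x ^ m))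
        + (A m * x ^ m * (B j * y ^ j) - A m * y ^ m * (B j * x ^ j)))
      = (∑ j ∈ s, ∑ m ∈ s, (A j * x ^ j * (B m * y ^ m) - A j * y ^ j * (B m * x ^ m)))
      + ∑ j ∈ s, ∑ m ∈ s, (A m * x ^ m * (B j * y ^ j) - A m * y ^ m * (B j * x ^ j)) := by
    rw [← Finset.sum_add_distrib]
    exact Finset.sum_congr rfl fun j _ => Finset.sum_add_distrib
  have hcomm : ∑ j ∈ s, ∑ m ∈ s, (A m * x ^ m * (B j * y ^ j) - A m * y ^ m * (B j * x ^ j))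
      = ∑ j ∈ s, ∑ m ∈ s, (A j * x ^ j * (B m * y ^ m) - A j * y ^ j * (B m * x ^ m)) :=
    Finset.sum_comm
  have hdouble : 0 ≤ ∑ j ∈ s, ∑ m ∈ s,
      (A j * x ^ j * (B m * y ^ m) - A j * y ^ j * (B m * x ^ m)) := by
    rw [hsplit, hcomm] at hsum
    linarith
  have hexp : (∑ j ∈ s, A j * x ^ j) * (∑ m ∈ s, B m * y ^ m)
      - (∑ j ∈ s, A j * y ^ j) * (∑ m ∈ s, B m * x ^ m)
      = ∑ j ∈ s, ∑ m ∈ s, (A j * x ^ j * (B m * y ^ m) - A j * y ^ j * (B m * x ^ m)) := by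
    rw [Finset.sum_mul_sum, Finset.sum_mul_sum, ← Finset.sum_sub_distrib]
    exact Finset.sum_congr rfl fun j _ => by rw [Finset.sum_sub_distrib]
  linarith [hexp ▸ hdouble]
end

section
/- Let f : [0,∞) → [0,∞) be a function such that f(μ+1)f(μ+β) − f(μ)f(μ+1+β) ≥ 0 for all μ, β ≥ 0. Then for every positive integer α and all μ, β ≥ 0, one has f(μ+α)f(μ+β) − f(μ)f(μ+α+β) ≥ 0. -/
/-!
Call `α` a Turán shift of `f` if `f μ f(μ+α+β) ≤ f(μ+α) f(μ+β)` for all `μ, β ≥ 0`. Nonnegative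
Turán shifts are closed under addition: for shifts `α` and `γ`, multiplying the inequalities for
`α` at `(μ, β)` and for `γ` at `(μ + α, β)` and cancelling `f(μ+α) f(μ+α+β)` gives the inequality
for `α + γ`; when one of these two factors vanishes, the inequalities for `α` at `(μ, β + γ)` or
for `γ` at `(μ, α + β)` force the left-hand side to vanish as well. Since `0` is trivially
a Turán shift and `1` is one by hypothesis, so is every natural number.
-/

theorem mul_le_mul_of_mul_le_mul_of_pos {R : Type*} [CommRing R] [LinearOrder R]
    [IsStrictOrderedRing R] {a b c d e g : R} (ha : 0 < a) (hd : 0 < d) (hc : 0 ≤ c)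
    (he : 0 ≤ e) (h₁ : c * d ≤ a * b) (h₂ : a * g ≤ e * d) : c * g ≤ e * b := by
  refine le_of_mul_le_mul_left ?_ (mul_pos ha hd)
  calc a * d * (c * g) = a * g * (c * d) := by ring
    _ ≤ e * d * (a * b) := mul_le_mul h₂ h₁ (by positivity) (by positivity)
    _ = a * d * (e * b) := by ring

def IsTuranShift (f : ℝ → ℝ) (α : ℝ) : Prop :=
  ∀ μ β : ℝ, 0 ≤ μ → 0 ≤ β → f μ * f (μ + α + β) ≤ f (μ + α) * f (μ + β)

namespace IsTuranShift

variable {f : ℝ → ℝ}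

theorem zero : IsTuranShift f 0 := fun μ β _ _ => by simp

theorem add (hf : ∀ x, 0 ≤ x → 0 ≤ f x) {α γ : ℝ} (hα₀ : 0 ≤ α) (hγ₀ : 0 ≤ γ)
    (hα : IsTuranShift f α) (hγ : IsTuranShift f γ) : IsTuranShift f (α + γ) := by
  intro μ β hμ hβ
  have hA := hα μ β hμ hβ
  have hA' := hα μ (β + γ) hμ (by positivity)
  have hB := hγ (μ + α) β (by positivity) hβ
  have hC := hγ μ (α + β) hμ (by positivity)
  rw [show μ + α + (β + γ) = μ + (α + γ) + β by ring] at hA'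
  rw [show μ + α + γ + β = μ + (α + γ) + β by ring, add_assoc μ α γ] at hB
  rw [show μ + γ + (α + β) = μ + (α + γ) + β by ring, ← add_assoc μ α β] at hC
  rcases (mul_nonneg (hf μ hμ) (hf (μ + (α + γ) + β) (by positivity))).eq_or_lt with h0 | hpos
  · rw [← h0]
    exact mul_nonneg (hf _ (by positivity)) (hf _ (by positivity))
  have ha : 0 < f (μ + α) :=
    pos_of_mul_pos_left (hpos.trans_le hA') (hf _ (by positivity))
  have hd : 0 < f (μ + α + β) :=
    pos_of_mul_pos_right (hpos.trans_le hC) (hf _ (by positivity))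
  exact mul_le_mul_of_mul_le_mul_of_pos ha hd (hf μ hμ) (hf _ (by positivity)) hA hB

theorem natCast (hf : ∀ x, 0 ≤ x → 0 ≤ f x) (h₁ : IsTuranShift f 1) (n : ℕ) :
    IsTuranShift f n := by
  induction n with
  | zero => simpa using zero
  | succ n ih => simpa using ih.add hf n.cast_nonneg zero_le_one h₁

end IsTuranShift

theorem stmt_2 (f : ℝ → ℝ) (hf : ∀ x, 0 ≤ x → 0 ≤ f x)
    (h : ∀ μ β : ℝ, 0 ≤ μ → 0 ≤ β →
      0 ≤ f (μ + 1) * f (μ + β) - f μ * f (μ + 1 + β)) :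
    ∀ (α : ℕ), 1 ≤ α → ∀ μ β : ℝ, 0 ≤ μ → 0 ≤ β →
      0 ≤ f (μ + α) * f (μ + β) - f μ * f (μ + α + β) := by
  have h₁ : IsTuranShift f 1 := fun μ β hμ hβ => sub_nonneg.mp (h μ β hμ hβ)
  intro α _ μ β hμ hβ
  exact sub_nonneg.mpr (IsTuranShift.natCast hf h₁ α μ β hμ hβ)
end

section
/- Let f : [0,∞) → [0,∞) satisfy f(μ+1)f(μ+β) − f(μ)f(μ+1+β) ≤ 0 for all μ, β ≥ 0. Then for every positive integer α and all μ, β ≥ 0, f(μ+α)f(μ+β) − f(μ)f(μ+α+β) ≤ 0. -/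
/-!
Set `a k = f (μ + k)` and `b k = f (μ + β + k)`. The hypothesis at `μ + k` says
`a (k+1) * b k ≤ a k * b (k+1)`, i.e. the ratio `b k / a k` is nondecreasing, so
`b 0 / a 0 ≤ b α / a α`. The induction multiplies the inequalities instead of dividing, and
zeros of `a` are harmless because, by the hypothesis with `β = 1`, `f x = 0` forces `f (x + 1) = 0`.
-/

theorem mul_le_mul_of_forall_succ_mul_le {a b : ℕ → ℝ} (ha : ∀ k, 0 ≤ a k)
    (hb : ∀ k, 0 ≤ b k) (hzero : ∀ k, a k = 0 → a (k + 1) = 0)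
    (hstep : ∀ k, a (k + 1) * b k ≤ a k * b (k + 1)) (n : ℕ) :
    a n * b 0 ≤ a 0 * b n := by
  induction n with
  | zero => rw [mul_comm]
  | succ n ih =>
    rcases (ha n).eq_or_lt with hn | hn
    · rw [hzero n hn.symm, zero_mul]
      exact mul_nonneg (ha 0) (hb _)
    · refine le_of_mul_le_mul_left ?_ hn
      calc a n * (a (n + 1) * b 0) = a (n + 1) * (a n * b 0) := by ring
        _ ≤ a (n + 1) * (a 0 * b n) := mul_le_mul_of_nonneg_left ih (ha _)
        _ = a 0 * (a (n + 1) * b n) := by ring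
        _ ≤ a 0 * (a n * b (n + 1)) := mul_le_mul_of_nonneg_left (hstep n) (ha 0)
        _ = a n * (a 0 * b (n + 1)) := by ring

theorem stmt_3 (f : ℝ → ℝ) (hf : ∀ x, 0 ≤ x → 0 ≤ f x)
    (h : ∀ μ β : ℝ, 0 ≤ μ → 0 ≤ β →
      f (μ + 1) * f (μ + β) - f μ * f (μ + 1 + β) ≤ 0) :
    ∀ (α : ℕ), 1 ≤ α → ∀ μ β : ℝ, 0 ≤ μ → 0 ≤ β →
      f (μ + α) * f (μ + β) - f μ * f (μ + α + β) ≤ 0 := by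
  intro α _ μ β hμ hβ
  have hzero : ∀ x, 0 ≤ x → f x = 0 → f (x + 1) = 0 := fun x hx hfx => by
    have h₁ := h x 1 hx zero_le_one
    rw [hfx, zero_mul, sub_zero] at h₁
    exact mul_self_eq_zero.mp (le_antisymm h₁ (mul_self_nonneg _))
  have key := mul_le_mul_of_forall_succ_mul_le (a := fun k : ℕ => f (μ + k))
    (b := fun k : ℕ => f (μ + β + k)) (fun k => hf _ (by positivity))
    (fun k => hf _ (by positivity))
    (fun k hk => by simpa only [Nat.cast_succ, add_assoc] using hzero _ (by positivity) hk)
    (fun k => by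
      have := h (μ + k) β (by positivity) hβ
      simp only [Nat.cast_succ]
      rw [show μ + β + k = μ + k + β by ring, show μ + β + (k + 1) = μ + k + 1 + β by ring,
        ← add_assoc]
      linarith)
    α
  simp only [Nat.cast_zero, add_zero] at key
  rw [show μ + α + β = μ + β + α by ring]
  linarith
end

section
/- Let p ≥ q ≥ 1, and let a ∈ ℝ^p, b ∈ ℝ^q be positive vectors such that b is weakly supermajorized by the subvector a' = (a_{p−q+1},…,a_p) of a, i.e. the components are sorted increasingly, each partial sum Σ_{i=1}^{k} a_{p−q+i} ≤ Σ_{i=1}^{k} b_i for k = 1,…,q. Then the inequalities e_p(a)/e_q(b) ≤ e_{p−1}(a)/e_{q−1}(b) ≤ … ≤ e_{p−q+1}(a)/e_1(b) ≤ e_{p−q}(a) hold, where e_m denotes the m-th elementary symmetric polynomial. -/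
open Finset

/-!
Write `r_j(x) = e_j(x) / e_{j-1}(x)`. The claim is `r_{p-q+j}(a) ≤ r_j(b)`; it factors through the
top part `a'` of `a`.

Since `r_k` is antitone in `k` for nonnegative entries (a Newton-type inequality), adjoining the
remaining `p - q` entries of `a` to `a'` one at a time gives `r_{p-q+j}(a) ≤ r_j(a')`.

The ratio `r_j` grows when one entry grows, and under a transfer `(x, y) ↦ (x + δ, y - δ)` with
`0 ≤ δ ≤ y - x`, which keeps `x + y` and raises `x y`. To get `r_j(a') ≤ r_j(b)`, walk from `a'` to
`b`, each time fixing the first entry where the current vector falls short of `b`: raise it, or move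
mass to it from the first later entry exceeding `b` (an admissible transfer because `b` is sorted).
Each step keeps the prefix-sum inequalities and matches one more entry with `b`.
-/

namespace Multiset

variable {R : Type*} [CommSemiring R]

theorem esymm_cons_succ (x : R) (s : Multiset R) (n : ℕ) :
    (x ::ₘ s).esymm (n + 1) = s.esymm (n + 1) + x * s.esymm n := by
  simp [esymm, powersetCard_cons, map_map, prod_cons, sum_map_mul_left]

/-- `e_m(s)` indexed by `m : ℤ` and zero for `m < 0`, so that `e_{m-1}` involves no truncated
subtraction. -/
def esymmInt (s : Multiset R) (m : ℤ) : R :=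
  if 0 ≤ m then s.esymm m.toNat else 0

theorem esymmInt_natCast (s : Multiset R) (n : ℕ) : s.esymmInt n = s.esymm n := by
  simp [esymmInt]

theorem esymmInt_of_neg {s : Multiset R} {m : ℤ} (hm : m < 0) : s.esymmInt m = 0 := by
  simp [esymmInt, not_le.mpr hm]

@[simp]
theorem esymmInt_zero_right (s : Multiset R) : s.esymmInt 0 = 1 := by
  simp [esymmInt, esymm, powersetCard_zero_left]

theorem esymmInt_zero_left {m : ℤ} (hm : m ≠ 0) : (0 : Multiset R).esymmInt m = 0 := by
  rcases lt_or_gt_of_ne hm with hm | hm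
  · exact esymmInt_of_neg hm
  · obtain ⟨n, rfl⟩ : ∃ n : ℕ, m = n + 1 := ⟨(m - 1).toNat, by omega⟩
    exact_mod_cast esymmInt_natCast (0 : Multiset R) (n + 1)

theorem esymmInt_cons (x : R) (s : Multiset R) (m : ℤ) :
    (x ::ₘ s).esymmInt m = s.esymmInt m + x * s.esymmInt (m - 1) := by
  rcases lt_trichotomy m 0 with hm | rfl | hm
  · simp [esymmInt_of_neg hm, esymmInt_of_neg (show m - 1 < 0 by omega)]
  · simp [esymmInt_of_neg (show (-1 : ℤ) < 0 by norm_num)]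
  · obtain ⟨n, rfl⟩ : ∃ n : ℕ, m = n + 1 := ⟨(m - 1).toNat, by omega⟩
    rw [add_sub_cancel_right]
    exact_mod_cast esymm_cons_succ x s n

theorem esymmInt_cons_cons (x y : R) (s : Multiset R) (m : ℤ) :
    (x ::ₘ y ::ₘ s).esymmInt m =
      s.esymmInt m + (x + y) * s.esymmInt (m - 1) + x * y * s.esymmInt (m - 1 - 1) := by
  simp only [esymmInt_cons]
  ring

section Ordered

variable {R : Type*} [CommRing R] [LinearOrder R] [IsStrictOrderedRing R] {s t : Multiset R}

theorem esymmInt_nonneg (hs : ∀ x ∈ s, 0 ≤ x) (m : ℤ) : 0 ≤ s.esymmInt m := by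
  induction s using Multiset.induction_on generalizing m with
  | empty =>
    rcases eq_or_ne m 0 with rfl | hm
    · simp
    · rw [esymmInt_zero_left hm]
  | cons x s ih =>
    have hx := hs x (mem_cons_self x s)
    have ih := fun m ↦ ih (fun y hy ↦ hs y (mem_cons_of_mem hy)) m
    rw [esymmInt_cons]
    exact add_nonneg (ih m) (mul_nonneg hx (ih _))

theorem esymmInt_pos (hs : ∀ x ∈ s, 0 < x) {m : ℤ} (h0 : 0 ≤ m) (hm : m ≤ card s) :
    0 < s.esymmInt m := by
  induction s using Multiset.induction_on generalizing m with
  | empty =>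
    obtain rfl : m = 0 := by simp at hm; omega
    simp
  | cons x s ih =>
    have hx := hs x (mem_cons_self x s)
    have hs' : ∀ y ∈ s, 0 < y := fun y hy ↦ hs y (mem_cons_of_mem hy)
    have hnn := esymmInt_nonneg fun y hy ↦ (hs' y hy).le
    rw [card_cons, Nat.cast_succ] at hm
    rw [esymmInt_cons]
    rcases le_or_gt m (card s) with hm' | hm'
    · exact add_pos_of_pos_of_nonneg (ih hs' h0 hm') (mul_nonneg hx.le (hnn _))
    · exact add_pos_of_nonneg_of_pos (hnn m) (mul_pos hx (ih hs' (by omega) (by omega)))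

/-- `e_j(s) / e_{j-1}(s) ≤ e_k(t) / e_{k-1}(t)`, cross-multiplied. -/
def RatioLE (s : Multiset R) (j : ℤ) (t : Multiset R) (k : ℤ) : Prop :=
  s.esymmInt j * t.esymmInt (k - 1) ≤ s.esymmInt (j - 1) * t.esymmInt k

theorem RatioLE.trans {u : Multiset R} {i j k : ℤ} (hst : RatioLE s i t j) (htu : RatioLE t j u k)
    (hs : 0 ≤ s.esymmInt (i - 1)) (ht : 0 < t.esymmInt (j - 1)) (hu : 0 ≤ u.esymmInt (k - 1)) :
    RatioLE s i u k := by
  unfold RatioLE at *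
  refine le_of_mul_le_mul_right ?_ ht
  nlinarith [mul_le_mul_of_nonneg_right hst hu, mul_le_mul_of_nonneg_left htu hs]

theorem ratioLE_self_of_le (hs : ∀ x ∈ s, 0 ≤ x) {i k : ℤ} (hik : i ≤ k) : RatioLE s k s i := by
  induction s using Multiset.induction_on generalizing i k with
  | empty =>
    unfold RatioLE
    have hzero : (0 : Multiset R).esymmInt k * (0 : Multiset R).esymmInt (i - 1) = 0 := by
      rcases eq_or_ne k 0 with rfl | hk
      · rw [esymmInt_zero_left (show i - 1 ≠ 0 by omega), mul_zero]
      · rw [esymmInt_zero_left hk, zero_mul]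
    rw [hzero]
    exact mul_nonneg (esymmInt_nonneg (by simp) _) (esymmInt_nonneg (by simp) _)
  | cons x s ih =>
    have hx := hs x (mem_cons_self x s)
    have ih := fun {i k : ℤ} (h : i ≤ k) ↦ ih (fun y hy ↦ hs y (mem_cons_of_mem hy)) h
    have h0 := ih hik
    have h2 := ih (show i - 1 ≤ k - 1 by omega)
    have h1 : s.esymmInt k * s.esymmInt (i - 1 - 1) ≤ s.esymmInt (k - 1 - 1) * s.esymmInt i := by
      rcases hik.eq_or_lt with rfl | hik
      · rw [mul_comm]
      · exact le_trans (ih (show i - 1 ≤ k by omega)) (ih (show i ≤ k - 1 by omega))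
    unfold RatioLE at *
    simp only [esymmInt_cons]
    linarith [mul_le_mul_of_nonneg_left h1 hx, mul_le_mul_of_nonneg_left h2 (mul_nonneg hx hx)]

theorem ratioLE_add (hs : ∀ x ∈ s, 0 ≤ x) (ht : ∀ x ∈ t, 0 ≤ x) {j k : ℤ}
    (hjk : j + card s ≤ k) : RatioLE (s + t) k t j := by
  induction s using Multiset.induction_on generalizing k with
  | empty =>
    simpa using ratioLE_self_of_le ht (show j ≤ k by simpa using hjk)
  | cons x s ih =>
    have hx := hs x (mem_cons_self x s)
    have hs' : ∀ y ∈ s, 0 ≤ y := fun y hy ↦ hs y (mem_cons_of_mem hy)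
    rw [card_cons, Nat.cast_succ] at hjk
    have h1 := ih hs' (show j + card s ≤ k by omega)
    have h2 := ih hs' (show j + card s ≤ k - 1 by omega)
    unfold RatioLE at *
    rw [cons_add, esymmInt_cons, esymmInt_cons]
    linarith [mul_le_mul_of_nonneg_left h2 hx]

theorem ratioLE_cons_of_le (hs : ∀ x ∈ s, 0 ≤ x) {x y : R} (hxy : x ≤ y) (j : ℤ) :
    RatioLE (x ::ₘ s) j (y ::ₘ s) j := by
  have hnewton := ratioLE_self_of_le hs (show j - 1 ≤ j by omega)
  unfold RatioLE at *
  simp only [esymmInt_cons]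
  -- with `Pᵢ = e_{j-i}(s)`, the difference of the two sides is `(y - x)(P₁² - P₀P₂)`
  linarith [mul_le_mul_of_nonneg_left hnewton (sub_nonneg.mpr hxy)]

theorem ratioLE_cons_cons (hs : ∀ x ∈ s, 0 ≤ x) {x y x' y' : R} (hσ : 0 ≤ x + y)
    (hsum : x' + y' = x + y) (hprod : x * y ≤ x' * y') (j : ℤ) :
    RatioLE (x ::ₘ y ::ₘ s) j (x' ::ₘ y' ::ₘ s) j := by
  have n1 := ratioLE_self_of_le hs (show j - 1 - 1 ≤ j by omega)
  have n2 := ratioLE_self_of_le hs (show j - 1 - 1 ≤ j - 1 by omega)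
  unfold RatioLE at *
  simp only [esymmInt_cons_cons, hsum]
  -- with `Pᵢ = e_{j-i}(s)`, the difference of the two sides is
  -- `(x'y' - xy)(P₁P₂ - P₀P₃ + (x + y)(P₂² - P₁P₃))`
  linarith [mul_le_mul_of_nonneg_left n1 (sub_nonneg.mpr hprod),
    mul_le_mul_of_nonneg_left n2 (mul_nonneg (sub_nonneg.mpr hprod) hσ)]

end Ordered

end Multiset

section Vectors

open Multiset

variable {R : Type*} [CommRing R] [LinearOrder R] [IsStrictOrderedRing R]

theorem Finset.map_val_eq_cons_erase {α β : Type*} [DecidableEq α] {s : Finset α} {i : α}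
    (hi : i ∈ s) (z : α → β) : s.val.map z = z i ::ₘ (s.erase i).val.map z := by
  rw [Finset.erase_val, ← Multiset.map_cons, Multiset.cons_erase hi]

theorem ratioLE_map_of_le_of_eqOn_erase {s : Finset ℕ} {z z' : ℕ → R} {i : ℕ} (hi : i ∈ s)
    (hz : ∀ m ∈ s, 0 ≤ z m) (hle : z i ≤ z' i) (heq : ∀ m ∈ s.erase i, z' m = z m) (j : ℤ) :
    RatioLE (s.val.map z) j (s.val.map z') j := by
  rw [Finset.map_val_eq_cons_erase hi z, Finset.map_val_eq_cons_erase hi z',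
    Multiset.map_congr rfl heq]
  exact ratioLE_cons_of_le (forall_mem_map_iff.mpr fun m hm ↦ hz m (Finset.mem_of_mem_erase hm))
    hle j

theorem ratioLE_map_of_eqOn_erase_erase {s : Finset ℕ} {z z' : ℕ → R} {i l : ℕ} (hi : i ∈ s)
    (hl : l ∈ s) (hil : i ≠ l) (hz : ∀ m ∈ s, 0 ≤ z m) (hsum : z' i + z' l = z i + z l)
    (hprod : z i * z l ≤ z' i * z' l) (heq : ∀ m ∈ (s.erase i).erase l, z' m = z m) (j : ℤ) :
    RatioLE (s.val.map z) j (s.val.map z') j := by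
  have hl' : l ∈ s.erase i := Finset.mem_erase.mpr ⟨hil.symm, hl⟩
  rw [Finset.map_val_eq_cons_erase hi z, Finset.map_val_eq_cons_erase hl' z,
    Finset.map_val_eq_cons_erase hi z', Finset.map_val_eq_cons_erase hl' z',
    Multiset.map_congr rfl heq]
  refine ratioLE_cons_cons ?_ (add_nonneg (hz i hi) (hz l hl)) hsum hprod j
  exact forall_mem_map_iff.mpr fun m hm ↦
    hz m (Finset.mem_of_mem_erase (Finset.mem_of_mem_erase hm))

end Vectors

section Transfer

variable {R : Type*} [AddCommGroup R] {z : ℕ → R}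

def transfer (z : ℕ → R) (i l : ℕ) (δ : R) (m : ℕ) : R :=
  z m + (if m = i then δ else 0) - (if m = l then δ else 0)

theorem transfer_left {i l : ℕ} (hil : i ≠ l) (δ : R) : transfer z i l δ i = z i + δ := by
  simp [transfer, hil]

theorem transfer_right {i l : ℕ} (hil : i ≠ l) (δ : R) : transfer z i l δ l = z l - δ := by
  simp [transfer, hil.symm]

theorem transfer_of_ne {i l m : ℕ} (hi : m ≠ i) (hl : m ≠ l) (δ : R) :
    transfer z i l δ m = z m := by
  simp [transfer, hi, hl]

theorem sum_transfer {s : Finset ℕ} {i l : ℕ} (hi : i ∈ s) (hl : l ∈ s) (δ : R) :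
    ∑ m ∈ s, transfer z i l δ m = ∑ m ∈ s, z m := by
  simp [transfer, sum_add_distrib, sum_sub_distrib, sum_ite_eq', hi, hl]

end Transfer

section Mismatches

variable {R : Type*} [DecidableEq R] {q : ℕ} {z b : ℕ → R}

def mismatches (q : ℕ) (z b : ℕ → R) : Finset ℕ := {m ∈ range q | z m ≠ b m}

theorem card_mismatches_lt {z' : ℕ → R} (hsub : ∀ m < q, z' m ≠ z m → z m ≠ b m)
    (hfix : ∃ m < q, z m ≠ b m ∧ z' m = b m) :
    #(mismatches q z' b) < #(mismatches q z b) := by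
  obtain ⟨m, hmq, hzm, hz'm⟩ := hfix
  apply card_lt_card
  rw [ssubset_iff_of_subset]
  · exact ⟨m, by simp [mismatches, hmq, hzm], by simp [mismatches, hz'm]⟩
  · intro n hn
    simp only [mismatches, mem_filter, mem_range] at hn ⊢
    refine ⟨hn.1, fun h ↦ ?_⟩
    by_cases hzn : z' n = z n
    · exact hn.2 (hzn.trans h)
    · exact hsub n hn.1 hzn h

end Mismatches

section Smoothing

open Multiset (esymmInt RatioLE)

variable {R : Type*} [CommRing R] [LinearOrder R] [IsStrictOrderedRing R] {q : ℕ} {z b : ℕ → R}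

def PrefixSumLE (q : ℕ) (z b : ℕ → R) : Prop :=
  ∀ k ≤ q, ∑ i ∈ range k, z i ≤ ∑ i ∈ range k, b i

def IsSmoothingStep (q : ℕ) (b z z' : ℕ → R) : Prop :=
  (∀ m < q, 0 < z' m) ∧ PrefixSumLE q z' b ∧ #(mismatches q z' b) < #(mismatches q z b) ∧
    ∀ j, RatioLE ((range q).val.map z) j ((range q).val.map z') j

theorem exists_first_deficit (hpre : PrefixSumLE q z b) (h : (mismatches q z b).Nonempty) :
    ∃ i < q, z i < b i ∧ ∀ m < i, z m = b m := by
  classical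
  have hex : ∃ i, i < q ∧ z i ≠ b i := by simpa [mismatches, Finset.Nonempty] using h
  obtain ⟨hiq, hne⟩ := Nat.find_spec hex
  have hbelow : ∀ m < Nat.find hex, z m = b m := fun m hm ↦
    not_not.mp fun hne ↦ Nat.find_min hex hm ⟨hm.trans hiq, hne⟩
  refine ⟨Nat.find hex, hiq, lt_of_le_of_ne ?_ hne, hbelow⟩
  have := hpre _ hiq
  rw [sum_range_succ, sum_range_succ, sum_congr rfl fun m hm ↦ hbelow m (mem_range.mp hm)] at this
  linarith

theorem isSmoothingStep_update (hz : ∀ m < q, 0 < z m) {i : ℕ} (hiq : i < q) (hzi : z i < b i)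
    (hbelow : ∀ m < i, z m = b m) (habove : ∀ m < q, i < m → z m ≤ b m) :
    IsSmoothingStep q b z (Function.update z i (b i)) := by
  have hle : ∀ m < q, Function.update z i (b i) m ≤ b m := by
    intro m hm
    rcases lt_trichotomy m i with h | rfl | h
    · simp [Function.update_of_ne h.ne, hbelow m h]
    · simp
    · simp [Function.update_of_ne h.ne', habove m hm h]
  refine ⟨fun m hm ↦ ?_, fun k hk ↦ ?_, card_mismatches_lt ?_ ⟨i, hiq, hzi.ne, by simp⟩,
    ratioLE_map_of_le_of_eqOn_erase (mem_range.mpr hiq) (fun m hm ↦ (hz m (mem_range.mp hm)).le)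
      (by simpa using hzi.le) fun m hm ↦ Function.update_of_ne (mem_erase.mp hm).1 _ _⟩
  · rcases eq_or_ne m i with rfl | h
    · simpa using (hz m hm).trans hzi
    · simpa [Function.update_of_ne h] using hz m hm
  · exact sum_le_sum fun m hm ↦ hle m (by simp at hm; omega)
  · intro m _ hm
    obtain rfl : m = i := by by_contra h; simp [Function.update_of_ne h] at hm
    exact hzi.ne

theorem isSmoothingStep_transfer (hz : ∀ m < q, 0 < z m) (hpre : PrefixSumLE q z b)
    (hbmono : ∀ i j, i ≤ j → j < q → b i ≤ b j) {i l : ℕ} (hil : i < l) (hlq : l < q)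
    (hzi : z i < b i) (hbelow : ∀ m < i, z m = b m) (hzl : b l < z l)
    (hbetween : ∀ m, i < m → m < l → z m ≤ b m) :
    IsSmoothingStep q b z (transfer z i l (min (b i - z i) (z l - b l))) := by
  set δ := min (b i - z i) (z l - b l)
  have hδ : 0 < δ := lt_min (sub_pos.mpr hzi) (sub_pos.mpr hzl)
  have hδi : z i + δ ≤ b i := by linarith [min_le_left (b i - z i) (z l - b l)]
  have hδl : b l ≤ z l - δ := by linarith [min_le_right (b i - z i) (z l - b l)]
  have hbil := hbmono i l hil.le hlq
  have hz'i := transfer_left (z := z) hil.ne δ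
  have hz'l := transfer_right (z := z) hil.ne δ
  have hle : ∀ m < l, transfer z i l δ m ≤ b m := by
    intro m hm
    rcases lt_trichotomy m i with h | rfl | h
    · rw [transfer_of_ne h.ne hm.ne, hbelow m h]
    · rwa [hz'i]
    · rw [transfer_of_ne h.ne' hm.ne]; exact hbetween m h hm
  refine ⟨fun m hm ↦ ?_, fun k hk ↦ ?_, card_mismatches_lt ?_ ?_, fun j ↦ ?_⟩
  · rcases eq_or_ne m i with rfl | hi
    · rw [hz'i]; linarith [hz m hm]
    rcases eq_or_ne m l with rfl | hl
    · rw [hz'l]; linarith [hz i (hil.trans hlq)]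
    · rw [transfer_of_ne hi hl]; exact hz m hm
  · rcases lt_or_ge l k with hlk | hkl
    · rw [sum_transfer (mem_range.mpr (hil.trans hlk)) (mem_range.mpr hlk)]
      exact hpre k hk
    · exact sum_le_sum fun m hm ↦ hle m (by simp at hm; omega)
  · intro m _ hm
    rcases eq_or_ne m i with rfl | hi
    · exact hzi.ne
    rcases eq_or_ne m l with rfl | hl
    · exact hzl.ne'
    · exact absurd (transfer_of_ne hi hl δ) hm
  · rcases min_choice (b i - z i) (z l - b l) with h | h
    · exact ⟨i, hil.trans hlq, hzi.ne, by rw [hz'i, show δ = b i - z i from h]; ring⟩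
    · exact ⟨l, hlq, hzl.ne', by rw [hz'l, show δ = z l - b l from h]; ring⟩
  · refine ratioLE_map_of_eqOn_erase_erase (mem_range.mpr (hil.trans hlq)) (mem_range.mpr hlq)
      hil.ne (fun m hm ↦ (hz m (mem_range.mp hm)).le) (by rw [hz'i, hz'l]; ring) ?_
      (fun m hm ↦ ?_) j
    · -- `(zᵢ + δ)(zₗ - δ) - zᵢzₗ = δ (zₗ - zᵢ - δ)`, and `zᵢ + δ ≤ bᵢ ≤ bₗ ≤ zₗ - δ`
      rw [hz'i, hz'l]
      nlinarith
    · simp only [mem_erase] at hm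
      exact transfer_of_ne hm.2.1 hm.1 δ

theorem exists_isSmoothingStep (hz : ∀ m < q, 0 < z m) (hpre : PrefixSumLE q z b)
    (hbmono : ∀ i j, i ≤ j → j < q → b i ≤ b j) (h : (mismatches q z b).Nonempty) :
    ∃ z', IsSmoothingStep q b z z' := by
  classical
  obtain ⟨i, hiq, hzi, hbelow⟩ := exists_first_deficit hpre h
  by_cases hex : ∃ l, i < l ∧ l < q ∧ b l < z l
  · obtain ⟨hil, hlq, hzl⟩ := Nat.find_spec hex
    have hbetween : ∀ m, i < m → m < Nat.find hex → z m ≤ b m := fun m him hm ↦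
      not_lt.mp fun hbz ↦ Nat.find_min hex hm ⟨him, hm.trans hlq, hbz⟩
    exact ⟨_, isSmoothingStep_transfer hz hpre hbmono hil hlq hzi hbelow hzl hbetween⟩
  · simp only [not_exists, not_and, not_lt] at hex
    exact ⟨_, isSmoothingStep_update hz hiq hzi hbelow fun m hm him ↦ hex m him hm⟩

theorem ratioLE_of_prefixSumLE (hb : ∀ m < q, 0 ≤ b m)
    (hbmono : ∀ i j, i ≤ j → j < q → b i ≤ b j) (hz : ∀ m < q, 0 < z m)
    (hpre : PrefixSumLE q z b) {j : ℤ} (hj1 : 1 ≤ j) (hjq : j ≤ q) :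
    RatioLE ((range q).val.map z) j ((range q).val.map b) j := by
  induction hn : #(mismatches q z b) using Nat.strong_induction_on generalizing z with
  | _ n ih =>
  rcases (mismatches q z b).eq_empty_or_nonempty with hempty | hne
  · have hzb : ∀ m ∈ range q, b m = z m := fun m hm ↦ of_not_not fun h ↦
      eq_empty_iff_forall_notMem.mp hempty m (by simp [mismatches, mem_range.mp hm, Ne.symm h])
    rw [Multiset.map_congr rfl fun m hm ↦ hzb m hm]
    exact (mul_comm _ _).le
  obtain ⟨z', hz'pos, hz'pre, hcard, hratio⟩ := exists_isSmoothingStep hz hpre hbmono hne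
  exact (hratio j).trans (ih _ (hn ▸ hcard) hz'pos hz'pre rfl)
    (Multiset.esymmInt_nonneg (by simpa using fun m hm ↦ (hz m hm).le) _)
    (Multiset.esymmInt_pos (by simpa using hz'pos) (by omega) (by simp; omega))
    (Multiset.esymmInt_nonneg (by simpa using hb) _)

end Smoothing

open Multiset (esymmInt RatioLE esymmInt_nonneg esymmInt_pos)

theorem esymm_eq_esymmInt (p : ℕ) (a : ℕ → ℝ) (m : ℕ) :
    esymm p a m = esymmInt ((range p).val.map a) m := by
  rw [Multiset.esymmInt_natCast, Finset.esymm_map_val]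
  rfl

theorem stmt_7_general (p q : ℕ) (hpq : q ≤ p) (a b : ℕ → ℝ)
    (ha : ∀ i < p, 0 < a i) (hb : ∀ j < q, 0 < b j)
    (hbmono : ∀ i j, i ≤ j → j < q → b i ≤ b j)
    (hmaj : ∀ k ≤ q, ∑ i ∈ Finset.range k, a (p - q + i) ≤ ∑ i ∈ Finset.range k, b i) :
    ∀ j, 1 ≤ j → j ≤ q →
      esymm p a (p - q + j) / esymm q b j ≤ esymm p a (p - q + j - 1) / esymm q b (j - 1) := by
  intro j hj1 hjq
  set d := p - q
  set C := (range q).val.map fun i ↦ a (d + i)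
  have hC : ∀ x ∈ C, 0 < x := by simpa [C] using fun i hi ↦ ha (d + i) (by omega)
  have hA : (range p).val.map a = (range d).val.map a + C := by
    simp [C, range_val, show p = d + q by omega, Multiset.range_add]
  have hAC : RatioLE ((range p).val.map a) (d + j) C j := by
    rw [hA]
    exact Multiset.ratioLE_add (by simpa using fun i hi ↦ (ha i (by omega)).le)
      (fun x hx ↦ (hC x hx).le) (by simp [add_comm])
  have hCB := ratioLE_of_prefixSumLE (fun i hi ↦ (hb i hi).le) hbmono
    (fun i hi ↦ ha (d + i) (by omega)) hmaj (z := fun i ↦ a (d + i)) (j := j)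
    (by exact_mod_cast hj1) (by exact_mod_cast hjq)
  have hAB := hAC.trans hCB (esymmInt_nonneg (by simpa using fun i hi ↦ (ha i hi).le) _)
    (esymmInt_pos hC (by omega) (by simp [C]; omega))
    (esymmInt_nonneg (by simpa using fun i hi ↦ (hb i hi).le) _)
  have hbpos : ∀ m ≤ q, 0 < esymm q b m := fun m hm ↦ by
    rw [esymm_eq_esymmInt]
    exact esymmInt_pos (by simpa using hb) (by omega) (by simpa using hm)
  rw [div_le_div_iff₀ (hbpos j hjq) (hbpos _ (by omega)), esymm_eq_esymmInt, esymm_eq_esymmInt,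
    esymm_eq_esymmInt, esymm_eq_esymmInt]
  push_cast [Nat.cast_sub hj1, Nat.cast_sub (show 1 ≤ d + j by omega)]
  exact hAB

theorem stmt_7 (p q : ℕ) (hq : 1 ≤ q) (hpq : q ≤ p) (a b : ℕ → ℝ)
    (ha : ∀ i < p, 0 < a i) (hb : ∀ j < q, 0 < b j)
    (hamono : ∀ i j, i ≤ j → j < p → a i ≤ a j)
    (hbmono : ∀ i j, i ≤ j → j < q → b i ≤ b j)
    (hmaj : ∀ k ≤ q, ∑ i ∈ Finset.range k, a (p - q + i) ≤ ∑ i ∈ Finset.range k, b i) :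
    ∀ j, 1 ≤ j → j ≤ q →
      esymm p a (p - q + j) / esymm q b j ≤ esymm p a (p - q + j - 1) / esymm q b (j - 1) :=
  stmt_7_general p q hpq a b ha hb hbmono hmaj
end

section
/- Let p ≤ q, and let a ∈ ℝ^p, b ∈ ℝ^q be positive vectors such that a is weakly supermajorized by some subvector b' of b with p elements (i.e., sorting increasingly, Σ_{i=1}^{k} b'_i ≤ Σ_{i=1}^{k} a_i for k = 1,…,p). Then the inequalities e_q(b)/e_p(a) ≤ e_{q−1}(b)/e_{p−1}(a) ≤ … ≤ e_{q−p+1}(b)/e_1(a) ≤ e_{q−p}(b) hold. -/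
open Finset

noncomputable def E (s : Finset ℕ) (x : ℕ → ℝ) (m : ℕ) : ℝ :=
  ∑ t ∈ s.powersetCard m, ∏ i ∈ t, x i

lemma E_zero (s : Finset ℕ) (x : ℕ → ℝ) : E s x 0 = 1 := by
  simp [E]

lemma E_congr {s : Finset ℕ} {x y : ℕ → ℝ} (h : ∀ i ∈ s, x i = y i) (m : ℕ) :
    E s x m = E s y m := by
  unfold E
  refine Finset.sum_congr rfl fun t ht => ?_
  rw [mem_powersetCard] at ht
  exact Finset.prod_congr rfl fun i hi => h i (ht.1 hi)

lemma E_eq_zero {s : Finset ℕ} (x : ℕ → ℝ) {m : ℕ} (h : s.card < m) : E s x m = 0 := by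
  unfold E
  rw [powersetCard_eq_empty.2 h, Finset.sum_empty]

lemma E_nonneg {s : Finset ℕ} {x : ℕ → ℝ} (hx : ∀ i ∈ s, 0 ≤ x i) (m : ℕ) :
    0 ≤ E s x m := by
  apply Finset.sum_nonneg
  intro t ht
  rw [mem_powersetCard] at ht
  exact Finset.prod_nonneg fun i hi => hx i (ht.1 hi)

lemma E_pos {s : Finset ℕ} {x : ℕ → ℝ} (hx : ∀ i ∈ s, 0 < x i) {m : ℕ} (hm : m ≤ s.card) :
    0 < E s x m := by
  obtain ⟨t, hts, htc⟩ := Finset.exists_subset_card_eq hm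
  apply Finset.sum_pos'
  · intro u hu
    rw [mem_powersetCard] at hu
    exact Finset.prod_nonneg fun i hi => (hx i (hu.1 hi)).le
  · refine ⟨t, ?_, ?_⟩
    · rw [mem_powersetCard]; exact ⟨hts, htc⟩
    · exact Finset.prod_pos fun i hi => hx i (hts hi)

lemma E_rec {s : Finset ℕ} {i : ℕ} (hi : i ∉ s) (x : ℕ → ℝ) (m : ℕ) :
    E (insert i s) x (m + 1) = E s x (m + 1) + x i * E s x m := by
  unfold E
  rw [powersetCard_succ_insert hi, Finset.sum_union, Finset.sum_image, Finset.mul_sum]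
  · congr 1
    refine Finset.sum_congr rfl fun t ht => ?_
    rw [mem_powersetCard] at ht
    rw [Finset.prod_insert (fun hit => hi (ht.1 hit))]
  · intro t ht u hu htu
    rw [Finset.mem_coe, mem_powersetCard] at ht hu
    have hit : i ∉ t := fun h => hi (ht.1 h)
    have hiu : i ∉ u := fun h => hi (hu.1 h)
    rw [← Finset.erase_insert hit, ← Finset.erase_insert hiu, htu]
  · rw [Finset.disjoint_left]
    intro t ht htim
    rw [mem_powersetCard] at ht
    rw [Finset.mem_image] at htim
    obtain ⟨u, hu, rfl⟩ := htim
    rw [mem_powersetCard] at hu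
    exact (fun h => hi (ht.1 h)) (Finset.mem_insert_self i u)

lemma E_lc (s : Finset ℕ) (x : ℕ → ℝ) (hx : ∀ i ∈ s, 0 ≤ x i) :
    ∀ k l, k ≤ l → E s x k * E s x (l + 1) ≤ E s x (k + 1) * E s x l := by
  induction s using Finset.induction_on with
  | empty =>
    intro k l _
    rw [E_eq_zero x (by simp : (∅ : Finset ℕ).card < l + 1), mul_zero]
    exact mul_nonneg (E_nonneg (by simp) _) (E_nonneg (by simp) _)
  | @insert i s hi IH =>
    intro k l hkl
    have hxs : ∀ j ∈ s, 0 ≤ x j := fun j hj => hx j (mem_insert_of_mem hj)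
    have ht : 0 ≤ x i := hx i (mem_insert_self i s)
    have hN : ∀ m, 0 ≤ E s x m := E_nonneg hxs
    match k, l, hkl with
    | 0, 0, _ => simp [E_zero, mul_comm]
    | 0, l' + 1, _ =>
      rw [E_zero, one_mul, E_rec hi, E_rec hi, E_rec hi, E_zero, mul_one]
      have h1 := IH hxs 0 (l' + 1) (by omega)
      rw [E_zero, one_mul, Nat.zero_add] at h1
      rw [Nat.zero_add]
      nlinarith [h1, hN l', hN (l' + 1), mul_nonneg ht (hN l'),
        mul_nonneg (mul_nonneg ht ht) (hN l'), mul_nonneg ht (mul_nonneg (hN 1) (hN l'))]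
    | k' + 1, l' + 1, hkl =>
      have hk'l' : k' ≤ l' := by omega
      rw [E_rec hi, E_rec hi, E_rec hi, E_rec hi]
      have h1 : E s x (k' + 1) * E s x (l' + 2) ≤ E s x (k' + 2) * E s x (l' + 1) :=
        IH hxs (k' + 1) (l' + 1) (by omega)
      have h2 : E s x k' * E s x (l' + 1) ≤ E s x (k' + 1) * E s x l' := IH hxs k' l' hk'l'
      have h3 : E s x k' * E s x (l' + 2) ≤ E s x (k' + 2) * E s x l' := by
        rcases eq_or_lt_of_le hk'l' with rfl | hlt
        · ring_nf; nlinarith [IH hxs k' (k'+1) (by omega)]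
        · calc E s x k' * E s x (l' + 2) ≤ E s x (k' + 1) * E s x (l' + 1) :=
                IH hxs k' (l' + 1) (by omega)
          _ ≤ E s x (k' + 2) * E s x l' := IH hxs (k' + 1) l' (by omega)
      nlinarith [mul_le_mul_of_nonneg_left h3 ht, mul_le_mul_of_nonneg_left h2 (mul_nonneg ht ht)]

lemma E_one {s : Finset ℕ} {i : ℕ} (hi : i ∉ s) (x : ℕ → ℝ) :
    E (insert i s) x 1 = E s x 1 + x i := by
  have := E_rec hi x 0
  rwa [E_zero, mul_one] at this

lemma E_pair {s : Finset ℕ} {i i' : ℕ} (hi : i ∉ s) (h2 : i' ∉ insert i s) (x : ℕ → ℝ)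
    (m : ℕ) : E (insert i' (insert i s)) x (m + 2) =
      E s x (m + 2) + (x i + x i') * E s x (m + 1) + (x i * x i') * E s x m := by
  rw [E_rec h2 x (m + 1), E_rec hi x (m + 1), E_rec hi x m]
  ring

lemma E_pair_one {s : Finset ℕ} {i i' : ℕ} (hi : i ∉ s) (h2 : i' ∉ insert i s) (x : ℕ → ℝ) :
    E (insert i' (insert i s)) x 1 = E s x 1 + (x i + x i') := by
  rw [E_one h2 x, E_one hi x]; ring

lemma transfer_s8 {s : Finset ℕ} {i i' : ℕ} (hi : i ∉ s) (h2 : i' ∉ insert i s)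
    (x u v : ℕ → ℝ) (hx : ∀ k ∈ s, 0 ≤ x k)
    (hus : ∀ k ∈ s, u k = x k) (hvs : ∀ k ∈ s, v k = x k)
    (hsum : u i + u i' = v i + v i') (hprod : u i * u i' ≤ v i * v i')
    (hσ : 0 ≤ u i + u i') :
    ∀ j, E (insert i' (insert i s)) u (j + 1) * E (insert i' (insert i s)) v j ≤
      E (insert i' (insert i s)) u j * E (insert i' (insert i s)) v (j + 1) := by
  intro j
  have hcu : ∀ m, E s u m = E s x m := fun m => E_congr hus m
  have hcv : ∀ m, E s v m = E s x m := fun m => E_congr hvs m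
  have hN : ∀ m, 0 ≤ E s x m := E_nonneg hx
  match j with
  | 0 =>
    rw [E_zero, E_zero, mul_one, one_mul, E_pair_one hi h2 u, E_pair_one hi h2 v,
      hcu, hcv, hsum]
  | 1 =>
    rw [E_pair_one hi h2 u, E_pair_one hi h2 v, E_pair hi h2 u 0, E_pair hi h2 v 0,
      hcu, hcu, hcu, hcv, hcv, hcv, hsum, E_zero]
    have h1 : 0 ≤ E s x 1 + (v i + v i') := by
      have : 0 ≤ v i + v i' := hsum ▸ hσ
      linarith [hN 1]
    nlinarith [hN 0, hN 1, hN 2]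
  | (m + 2) =>
    rw [E_pair hi h2 u m, E_pair hi h2 v m, E_pair hi h2 u (m + 1), E_pair hi h2 v (m + 1),
      hsum]
    simp only [hcu, hcv]
    have hπ : u i * u i' ≤ v i * v i' := hprod
    have hσ' : 0 ≤ v i + v i' := hsum ▸ hσ
    have lc1 : E s x m * E s x (m + 3) ≤ E s x (m + 1) * E s x (m + 2) := by
      have := E_lc s x hx m (m + 2) (by omega)
      linarith [this]
    have lc2 : E s x m * E s x (m + 2) ≤ E s x (m + 1) * E s x (m + 1) :=
      E_lc s x hx m (m + 1) (by omega)
    nlinarith [mul_nonneg (sub_nonneg.2 hπ) (sub_nonneg.2 lc1),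
      mul_nonneg (mul_nonneg hσ' (sub_nonneg.2 hπ)) (sub_nonneg.2 lc2)]

lemma glue {s : Finset ℕ} {i : ℕ} (hi : i ∉ s) (u v : ℕ → ℝ)
    (hu : ∀ k ∈ s, 0 < u k) (hv : ∀ k ∈ s, 0 < v k) (hα : 0 ≤ u i) (hαβ : u i ≤ v i)
    (hIH : ∀ j, E s u (j + 1) * E s v j ≤ E s u j * E s v (j + 1)) :
    ∀ j, E (insert i s) u (j + 1) * E (insert i s) v j ≤
      E (insert i s) u j * E (insert i s) v (j + 1) := by
  have hun : ∀ k ∈ s, 0 ≤ u k := fun k hk => (hu k hk).le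
  have hvn : ∀ k ∈ s, 0 ≤ v k := fun k hk => (hv k hk).le
  have hNu : ∀ m, 0 ≤ E s u m := E_nonneg hun
  have hNv : ∀ m, 0 ≤ E s v m := E_nonneg hvn
  have hβ : 0 ≤ v i := le_trans hα hαβ
  intro j
  match j with
  | 0 =>
    rw [E_zero, E_zero, mul_one, one_mul, E_one hi u, E_one hi v]
    have := hIH 0
    rw [E_zero, E_zero, mul_one, one_mul] at this
    linarith
  | j'' + 1 =>
    rw [E_rec hi u, E_rec hi u, E_rec hi v, E_rec hi v]
    have h1 := hIH (j'' + 1)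
    have h2 := hIH j''
    have hAC : E s u (j'' + 2) * E s v j'' ≤ E s u j'' * E s v (j'' + 2) := by
      rcases lt_or_ge s.card (j'' + 2) with hc | hc
      · rw [E_eq_zero u hc, zero_mul]
        exact mul_nonneg (hNu _) (hNv _)
      · have hP : 0 < E s u (j'' + 1) * E s v (j'' + 1) :=
          mul_pos (E_pos hu (by omega)) (E_pos hv (by omega))
        have hprod := mul_le_mul h1 h2 (mul_nonneg (hNu _) (hNv _))
          (mul_nonneg (hNu _) (hNv _))
        have : E s u (j'' + 2) * E s v j'' * (E s u (j'' + 1) * E s v (j'' + 1)) ≤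
            E s u j'' * E s v (j'' + 2) * (E s u (j'' + 1) * E s v (j'' + 1)) := by
          nlinarith [hprod]
        exact le_of_mul_le_mul_right this hP
    have hAB : E s u (j'' + 2) * E s v j'' ≤ E s u (j'' + 1) * E s v (j'' + 1) := by
      rcases lt_or_ge s.card (j'' + 2) with hc | hc
      · rw [E_eq_zero u hc, zero_mul]
        exact mul_nonneg (hNu _) (hNv _)
      · have hQ : 0 < E s v (j'' + 1) * E s v (j'' + 2) :=
          mul_pos (E_pos hv (by omega)) (E_pos hv (by omega))
        have lcv : E s v j'' * E s v (j'' + 2) ≤ E s v (j'' + 1) * E s v (j'' + 1) :=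
          E_lc s v hvn j'' (j'' + 1) (by omega)
        have hprod := mul_le_mul h1 lcv (mul_nonneg (hNv _) (hNv _))
          (mul_nonneg (hNu _) (hNv _))
        have : E s u (j'' + 2) * E s v j'' * (E s v (j'' + 1) * E s v (j'' + 2)) ≤
            E s u (j'' + 1) * E s v (j'' + 1) * (E s v (j'' + 1) * E s v (j'' + 2)) := by
          nlinarith [hprod]
        exact le_of_mul_le_mul_right this hQ
    nlinarith [mul_nonneg (sub_nonneg.2 hαβ) (sub_nonneg.2 hAB),
      mul_nonneg hα (sub_nonneg.2 hAC),
      mul_nonneg (mul_nonneg hα hβ) (sub_nonneg.2 h2), sub_nonneg.2 h1]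

lemma peel {s : Finset ℕ} {i : ℕ} (hi : i ∉ s) (x : ℕ → ℝ) (hx : ∀ k ∈ s, 0 ≤ x k)
    (hxi : 0 ≤ x i) (m : ℕ) :
    E (insert i s) x (m + 2) * E s x m ≤ E (insert i s) x (m + 1) * E s x (m + 1) := by
  rw [E_rec hi x (m + 1), E_rec hi x m]
  have lc := E_lc s x hx m (m + 1) (by omega)
  nlinarith [lc, mul_nonneg hxi (mul_nonneg (E_nonneg hx m) (E_nonneg hx (m + 1)))]

lemma stepA (x : ℕ → ℝ) :
    ∀ (n : ℕ) (s S : Finset ℕ), S ⊆ s → s.card = S.card + n → (∀ k ∈ s, 0 < x k) →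
    ∀ j, E s x (n + (j + 1)) * E S x j ≤ E s x (n + j) * E S x (j + 1) := by
  intro n
  induction n with
  | zero =>
    intro s S hsub hcard hx j
    have : s = S := (Finset.eq_of_subset_of_card_le hsub (by omega)).symm
    subst this
    rw [Nat.zero_add, Nat.zero_add, mul_comm]
  | succ n IH =>
    intro s S hsub hcard hx j
    have hex : ∃ i, i ∈ s ∧ i ∉ S := by
      by_contra h
      push_neg at h
      have : s ⊆ S := fun i hi => h i hi
      have := Finset.card_le_card this
      omega
    obtain ⟨i, his, hiS⟩ := hex
    set s' := s.erase i with hs'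
    have hi' : i ∉ s' := Finset.notMem_erase i s
    have hins : insert i s' = s := Finset.insert_erase his
    have hsub' : S ⊆ s' := fun k hk => Finset.mem_erase.2 ⟨fun he => hiS (he ▸ hk), hsub hk⟩
    have hcard' : s'.card = S.card + n := by
      rw [hs', Finset.card_erase_of_mem his]
      have : 0 < s.card := Finset.card_pos.2 ⟨i, his⟩
      omega
    have hx' : ∀ k ∈ s', 0 < x k := fun k hk => hx k (Finset.mem_of_mem_erase hk)
    have hx'n : ∀ k ∈ s', 0 ≤ x k := fun k hk => (hx' k hk).le
    have hxi : 0 ≤ x i := (hx i his).le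
    -- peel : E s x (n+1+j+1) * E s' x (n+j) ≤ E s x (n+1+j) * E s' x (n+j+1)
    have P1 : E s x (n + 1 + (j + 1)) * E s' x (n + j) ≤
        E s x (n + 1 + j) * E s' x (n + j + 1) := by
      have := peel hi' x hx'n hxi (n + j)
      rw [hins] at this
      have e1 : n + 1 + (j + 1) = n + j + 2 := by omega
      have e2 : n + 1 + j = n + j + 1 := by omega
      rw [e1, e2]
      exact this
    have P2 : E s' x (n + (j + 1)) * E S x j ≤ E s' x (n + j) * E S x (j + 1) :=
      IH s' S hsub' hcard' hx' j
    -- chain with middle M = E s' x (n+j)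
    rcases lt_or_ge S.card j with hc | hc
    · rw [E_eq_zero x (by omega : S.card < j), mul_zero]
      exact mul_nonneg (E_nonneg (fun k hk => (hx k hk).le) _)
        (E_nonneg (fun k hk => (hx k (hsub hk)).le) _)
    · rcases eq_or_lt_of_le hc with rfl | hcj
      · -- j = S.card : RHS second factor is zero, show LHS = 0
        rw [E_eq_zero x (by omega : S.card < S.card + 1), mul_zero,
          E_eq_zero x (by omega : s.card < n + 1 + (S.card + 1)), zero_mul]
      · -- j < S.card : cancel M = E s' x (n+j) > 0
        have hM : 0 < E s' x (n + j) := E_pos hx' (by omega)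
        have hchain : E s x (n + 1 + (j + 1)) * E S x j * E s' x (n + j) ≤
            E s x (n + 1 + j) * E S x (j + 1) * E s' x (n + j) := by
          have t1 : E s x (n + 1 + (j + 1)) * E S x j * E s' x (n + j) =
              E s x (n + 1 + (j + 1)) * E s' x (n + j) * E S x j := by ring
          have hYn : 0 ≤ E S x j := E_nonneg (fun k hk => (hx k (hsub hk)).le) _
          calc E s x (n + 1 + (j + 1)) * E S x j * E s' x (n + j)
              = E s x (n + 1 + (j + 1)) * E s' x (n + j) * E S x j := by ring
            _ ≤ E s x (n + 1 + j) * E s' x (n + j + 1) * E S x j :=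
                mul_le_mul_of_nonneg_right P1 hYn
            _ = E s x (n + 1 + j) * (E s' x (n + (j + 1)) * E S x j) := by
                rw [(by omega : n + j + 1 = n + (j + 1))]; ring
            _ ≤ E s x (n + 1 + j) * (E s' x (n + j) * E S x (j + 1)) := by
                apply mul_le_mul_of_nonneg_left P2
                exact E_nonneg (fun k hk => (hx k hk).le) _
            _ = E s x (n + 1 + j) * E S x (j + 1) * E s' x (n + j) := by ring
        exact le_of_mul_le_mul_right hchain hM

lemma chain_ratio {A B C : ℕ → ℝ} (hA : ∀ m, 0 ≤ A m) (hB : ∀ m, 0 ≤ B m)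
    (hC : ∀ m, 0 ≤ C m)
    (hAB : ∀ j, A (j + 1) * B j ≤ A j * B (j + 1))
    (hBC : ∀ j, B (j + 1) * C j ≤ B j * C (j + 1))
    (hz : ∀ j, 0 < B j ∨ A (j + 1) = 0) :
    ∀ j, A (j + 1) * C j ≤ A j * C (j + 1) := by
  intro j
  rcases hz j with hpos | hzero
  · have h : A (j + 1) * C j * B j ≤ A j * C (j + 1) * B j := by
      calc A (j + 1) * C j * B j = A (j + 1) * B j * C j := by ring
        _ ≤ A j * B (j + 1) * C j := mul_le_mul_of_nonneg_right (hAB j) (hC j)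
        _ = (B (j + 1) * C j) * A j := by ring
        _ ≤ (B j * C (j + 1)) * A j := mul_le_mul_of_nonneg_right (hBC j) (hA j)
        _ = A j * C (j + 1) * B j := by ring
    exact le_of_mul_le_mul_right h hpos
  · rw [hzero, zero_mul]
    exact mul_nonneg (hA j) (hC (j + 1))


lemma stepB : ∀ (p : ℕ) (u v : ℕ → ℝ),
    (∀ i, i < p → 0 < u i) → (∀ i, i < p → 0 < v i) →
    (∀ i j, i ≤ j → j < p → v i ≤ v j) →
    (∀ k, k ≤ p → ∑ i ∈ range k, u i ≤ ∑ i ∈ range k, v i) →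
    ∀ j, E (range p) u (j + 1) * E (range p) v j ≤
      E (range p) u j * E (range p) v (j + 1) := by
  intro p
  induction p with
  | zero =>
    intro u v _ _ _ _ j
    rw [E_eq_zero u (by simp : (range 0).card < j + 1), zero_mul]
    exact mul_nonneg (E_nonneg (by simp) _) (E_nonneg (by simp) _)
  | succ p IH =>
    intro u v hu hv hvmono hmaj j
    have hup : ∀ k ∈ range p, 0 < u k := fun k hk => hu k (by simp at hk; omega)
    have hvp : ∀ k ∈ range p, 0 < v k := fun k hk => hv k (by simp at hk; omega)
    rcases le_or_gt (u p) (v p) with hle | hlt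
    · -- case 1 : peel last coordinate directly
      rw [range_add_one]
      refine glue notMem_range_self u v hup hvp (hu p (by omega)).le hle ?_ j
      exact IH u v (fun i hi => hu i (by omega)) (fun i hi => hv i (by omega))
        (fun i j hij hj => hvmono i j hij (by omega)) (fun k hk => hmaj k (by omega))
    · -- case 2 : transfer then peel
      set T := (range p).filter (fun i => u i ≤ v p) with hT
      have hTne : T.Nonempty := by
        rw [Finset.filter_nonempty_iff]
        by_contra h
        push_neg at h
        have hstrict : ∀ i ∈ range (p + 1), v i < u i := by
          intro i hi
          rw [mem_range] at hi
          rcases Nat.lt_or_ge i p with hip | hip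
          · calc v i ≤ v p := hvmono i p (by omega) (by omega)
              _ < u i := h i (mem_range.2 hip)
          · have : i = p := by omega
            subst this; exact hlt
        have := Finset.sum_lt_sum_of_nonempty ⟨p, self_mem_range_succ p⟩ hstrict
        have := hmaj (p + 1) le_rfl
        linarith
      set i₀ := T.max' hTne with hi₀
      have hi₀T : i₀ ∈ T := T.max'_mem hTne
      have hi₀p : i₀ < p := by
        have := (Finset.mem_filter.1 hi₀T).1; rwa [mem_range] at this
      have hui₀ : u i₀ ≤ v p := (Finset.mem_filter.1 hi₀T).2
      have hmax : ∀ i, i₀ < i → i < p → v p < u i := by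
        intro i hgt hip
        by_contra h
        push_neg at h
        have : i ∈ T := Finset.mem_filter.2 ⟨mem_range.2 hip, h⟩
        have := T.le_max' i this
        omega
      set w : ℕ → ℝ := fun k => if k = i₀ then u i₀ + (u p - v p) else if k = p then v p else u k
        with hw
      have hwi₀ : w i₀ = u i₀ + (u p - v p) := by simp [hw]
      have hwp : w p = v p := by
        have : p ≠ i₀ := by omega
        simp [hw, this]
      have hwother : ∀ k, k ≠ i₀ → k ≠ p → w k = u k := by
        intro k h1 h2; simp [hw, h1, h2]
      -- (A) transfer inequality between u and w on range (p+1)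
      have hA : ∀ j, E (range (p + 1)) u (j + 1) * E (range (p + 1)) w j ≤
          E (range (p + 1)) u j * E (range (p + 1)) w (j + 1) := by
        have hins : insert p (insert i₀ ((range p).erase i₀)) = range (p + 1) := by
          rw [Finset.insert_erase (mem_range.2 hi₀p), range_add_one]
        have hi : i₀ ∉ (range p).erase i₀ := Finset.notMem_erase i₀ _
        have h2 : p ∉ insert i₀ ((range p).erase i₀) := by
          simp only [Finset.mem_insert]
          push_neg
          exact ⟨by omega, fun h => absurd (Finset.mem_of_mem_erase h) (by simp)⟩
        have := transfer_s8 hi h2 u u w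
          (fun k hk => (hup k (Finset.mem_of_mem_erase hk)).le)
          (fun k _ => rfl)
          (fun k hk => by
            have hk1 : k ≠ i₀ := Finset.ne_of_mem_erase hk
            have hk2 : k ≠ p := by
              have := Finset.mem_of_mem_erase hk; rw [mem_range] at this; omega
            exact hwother k hk1 hk2)
          (by rw [hwi₀, hwp]; ring)
          (by rw [hwi₀, hwp]; nlinarith [hlt, hui₀])
          (by nlinarith [hu i₀ (by omega), hu p (by omega)])
        rwa [hins] at this
      -- positivity of w
      have hwpos : ∀ i, i < p + 1 → 0 < w i := by
        intro i hi
        by_cases h1 : i = i₀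
        · rw [h1, hwi₀]
          have := hu i₀ (by omega)
          linarith
        · by_cases h2 : i = p
          · rw [h2, hwp]; exact hv p (by omega)
          · rw [hwother i h1 h2]; exact hu i hi
      -- prefix sums for w
      have hmajw : ∀ k, k ≤ p → ∑ i ∈ range k, w i ≤ ∑ i ∈ range k, v i := by
        intro k hk
        rcases le_or_gt k i₀ with hki | hki
        · have heq : ∑ i ∈ range k, w i = ∑ i ∈ range k, u i := by
            apply Finset.sum_congr rfl
            intro i hi
            rw [mem_range] at hi
            exact hwother i (by omega) (by omega)
          rw [heq]
          exact hmaj k (by omega)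
        · have hsplit : ∑ i ∈ range k, w i = ∑ i ∈ range k, u i + (u p - v p) := by
            have heq : ∑ i ∈ range k, w i = ∑ i ∈ range k,
                (u i + if i = i₀ then u p - v p else 0) := by
              apply Finset.sum_congr rfl
              intro i hi
              rw [mem_range] at hi
              rcases eq_or_ne i i₀ with h1 | h1
              · rw [h1, hwi₀]; simp
              · rw [hwother i h1 (by omega), if_neg h1]; ring
            rw [heq, Finset.sum_add_distrib,
              Finset.sum_ite_eq' (range k) i₀ (fun _ => u p - v p)]
            simp [mem_range.2 (by omega : i₀ < k)]
          rw [hsplit]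
          have htot := hmaj (p + 1) le_rfl
          have hu_split : ∑ i ∈ range p, u i = ∑ i ∈ range k, u i + ∑ i ∈ Ico k p, u i := by
            exact (Finset.sum_range_add_sum_Ico u hk).symm
          have hv_split : ∑ i ∈ range p, v i = ∑ i ∈ range k, v i + ∑ i ∈ Ico k p, v i := by
            exact (Finset.sum_range_add_sum_Ico v hk).symm
          have hu_top : ∑ i ∈ range (p + 1), u i = ∑ i ∈ range p, u i + u p :=
            Finset.sum_range_succ u p
          have hv_top : ∑ i ∈ range (p + 1), v i = ∑ i ∈ range p, v i + v p :=
            Finset.sum_range_succ v p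
          have hIco : ∑ i ∈ Ico k p, v i ≤ ∑ i ∈ Ico k p, u i := by
            apply Finset.sum_le_sum
            intro i hi
            rw [Finset.mem_Ico] at hi
            have h1 : v i ≤ v p := hvmono i p (by omega) (by omega)
            have h2 : v p < u i := hmax i (by omega) (by omega)
            linarith
          linarith
      -- (C) glue inequality between w and v on range (p+1)
      have hC : ∀ j, E (range (p + 1)) w (j + 1) * E (range (p + 1)) v j ≤
          E (range (p + 1)) w j * E (range (p + 1)) v (j + 1) := by
        intro j
        rw [range_add_one]
        refine glue notMem_range_self w v
          (fun k hk => hwpos k (by rw [mem_range] at hk; omega)) hvp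
          (by rw [hwp]; exact (hv p (by omega)).le) (by rw [hwp]) ?_ j
        exact IH w v (fun i hi => hwpos i (by omega)) (fun i hi => hv i (by omega))
          (fun i j hij hj => hvmono i j hij (by omega)) hmajw
      -- chain
      refine chain_ratio (fun m => E_nonneg (fun k hk => (hu k (by
          rw [mem_range] at hk; omega)).le) m)
        (fun m => E_nonneg (fun k hk => (hwpos k (by rw [mem_range] at hk; omega)).le) m)
        (fun m => E_nonneg (fun k hk => (hv k (by rw [mem_range] at hk; omega)).le) m)
        hA hC (fun j => ?_) j
      rcases le_or_gt j (p + 1) with hj | hj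
      · left
        exact E_pos (fun k hk => hwpos k (by rw [mem_range] at hk; omega))
          (by rw [card_range]; omega)
      · right
        exact E_eq_zero u (by rw [card_range]; omega)

lemma E_reindex {p : ℕ} {σ : ℕ → ℕ} (b : ℕ → ℝ)
    (hinj : ∀ i < p, ∀ j < p, σ i = σ j → i = j) (m : ℕ) :
    E ((range p).image σ) b m = E (range p) (fun i => b (σ i)) m := by
  have hinj' : Set.InjOn σ (range p) := fun i hi j hj h =>
    hinj i (mem_range.1 hi) j (mem_range.1 hj) h
  unfold E
  symm
  apply Finset.sum_bij (fun t _ => t.image σ)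
  · intro t ht
    rw [mem_powersetCard] at ht ⊢
    constructor
    · exact Finset.image_subset_image ht.1
    · rw [Finset.card_image_of_injOn (hinj'.mono (by exact_mod_cast ht.1)), ht.2]
  · intro t₁ h₁ t₂ h₂ heq
    rw [mem_powersetCard] at h₁ h₂
    ext i
    constructor
    · intro hi
      have : σ i ∈ t₂.image σ := heq ▸ (Finset.mem_image_of_mem σ hi)
      obtain ⟨i', hi', he⟩ := Finset.mem_image.1 this
      exact (hinj' (h₂.1 hi') (h₁.1 hi) he) ▸ hi'
    · intro hi
      have : σ i ∈ t₁.image σ := heq ▸ (Finset.mem_image_of_mem σ hi)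
      obtain ⟨i', hi', he⟩ := Finset.mem_image.1 this
      exact (hinj' (h₁.1 hi') (h₂.1 hi) he) ▸ hi'
  · intro t' ht'
    rw [mem_powersetCard] at ht'
    refine ⟨(range p).filter (fun i => σ i ∈ t'), ?_, ?_⟩
    · rw [mem_powersetCard]
      constructor
      · exact Finset.filter_subset _ _
      · have himg : ((range p).filter (fun i => σ i ∈ t')).image σ = t' := by
          ext y
          simp only [Finset.mem_image, Finset.mem_filter]
          constructor
          · rintro ⟨i, ⟨_, hy⟩, rfl⟩; exact hy
          · intro hy
            obtain ⟨i, hi, rfl⟩ := Finset.mem_image.1 (ht'.1 hy)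
            exact ⟨i, ⟨hi, hy⟩, rfl⟩
        have hcard := Finset.card_image_of_injOn (hinj'.mono
          (Finset.coe_subset.2 (Finset.filter_subset (fun i => σ i ∈ t') (range p))))
        rw [himg] at hcard
        rw [← hcard]
        exact ht'.2
    · ext y
      simp only [Finset.mem_image, Finset.mem_filter]
      constructor
      · rintro ⟨i, ⟨_, hy⟩, rfl⟩; exact hy
      · intro hy
        obtain ⟨i, hi, rfl⟩ := Finset.mem_image.1 (ht'.1 hy)
        exact ⟨i, ⟨hi, hy⟩, rfl⟩
  · intro t ht
    rw [mem_powersetCard] at ht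
    exact (Finset.prod_image (fun i hi j hj h => hinj' (ht.1 hi) (ht.1 hj) h)).symm


theorem stmt_8 (p q : ℕ) (hp : 1 ≤ p) (hpq : p ≤ q) (a b : ℕ → ℝ)
    (ha : ∀ i < p, 0 < a i) (hb : ∀ j < q, 0 < b j)
    (hamono : ∀ i j, i ≤ j → j < p → a i ≤ a j)
    -- `σ` selects a subvector `b' = b ∘ σ` of `b` with `p` elements, listed increasingly
    (σ : ℕ → ℕ) (hσq : ∀ i < p, σ i < q)
    (hσinj : ∀ i < p, ∀ j < p, σ i = σ j → i = j)
    (hbmono : ∀ i j, i ≤ j → j < p → b (σ i) ≤ b (σ j))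
    (hmaj : ∀ k ≤ p, ∑ i ∈ Finset.range k, b (σ i) ≤ ∑ i ∈ Finset.range k, a i) :
    ∀ j, 1 ≤ j → j ≤ p →
      esymm q b (q - p + j) / esymm p a j ≤ esymm q b (q - p + j - 1) / esymm p a (j - 1) := by
  intro j hj1 hjp
  obtain ⟨j', rfl⟩ : ∃ j', j = j' + 1 := ⟨j - 1, by omega⟩
  have heq1 : q - p + (j' + 1) - 1 = q - p + j' := by omega
  have heq2 : j' + 1 - 1 = j' := by omega
  rw [heq1, heq2]
  have hesymm : ∀ (n : ℕ) (x : ℕ → ℝ) (m : ℕ), esymm n x m = E (range n) x m :=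
    fun _ _ _ => rfl
  rw [hesymm, hesymm, hesymm, hesymm]
  have hpos1 : 0 < E (range p) a (j' + 1) := E_pos (fun k hk => ha k (mem_range.1 hk))
    (by rw [card_range]; omega)
  have hpos2 : 0 < E (range p) a j' := E_pos (fun k hk => ha k (mem_range.1 hk))
    (by rw [card_range]; omega)
  rw [div_le_div_iff₀ hpos1 hpos2]
  -- setup
  set u : ℕ → ℝ := fun i => b (σ i) with hu
  set S : Finset ℕ := (range p).image σ with hS
  have hSsub : S ⊆ range q := by
    intro y hy
    obtain ⟨i, hi, rfl⟩ := Finset.mem_image.1 hy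
    exact mem_range.2 (hσq i (mem_range.1 hi))
  have hScard : S.card = p := by
    rw [hS, Finset.card_image_of_injOn (fun i hi j hj h =>
      hσinj i (mem_range.1 hi) j (mem_range.1 hj) h), card_range]
  -- the three sequences
  set A : ℕ → ℝ := fun m => E (range q) b (q - p + m) with hA
  set B : ℕ → ℝ := fun m => E (range p) u m with hB
  set C : ℕ → ℝ := fun m => E (range p) a m with hC
  have hbq : ∀ k ∈ range q, 0 < b k := fun k hk => hb k (mem_range.1 hk)
  have hAB : ∀ j, A (j + 1) * B j ≤ A j * B (j + 1) := by
    intro j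
    have := stepA b (q - p) (range q) S hSsub
      (by rw [card_range, hScard]; omega) hbq j
    rw [E_reindex b hσinj, E_reindex b hσinj] at this
    have e1 : q - p + (j + 1) = q - p + j + 1 := by omega
    simpa [hA, hB, ← hu, e1] using this
  have hBC : ∀ j, B (j + 1) * C j ≤ B j * C (j + 1) :=
    stepB p u a (fun i hi => hb (σ i) (hσq i hi)) ha hamono hmaj
  have hAnn : ∀ m, 0 ≤ A m := fun m => E_nonneg (fun k hk => (hbq k hk).le) _
  have hBnn : ∀ m, 0 ≤ B m := fun m =>
    E_nonneg (fun k hk => (hb (σ k) (hσq k (mem_range.1 hk))).le) _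
  have hCnn : ∀ m, 0 ≤ C m := fun m => E_nonneg (fun k hk => (ha k (mem_range.1 hk)).le) _
  have hz : ∀ j, 0 < B j ∨ A (j + 1) = 0 := by
    intro j
    rcases le_or_gt j p with hj | hj
    · exact Or.inl (E_pos (fun k hk => hb (σ k) (hσq k (mem_range.1 hk)))
        (by rw [card_range]; omega))
    · exact Or.inr (E_eq_zero b (by rw [card_range]; omega))
  exact chain_ratio hAnn hBnn hCnn hAB hBC hz j'
end

section
/- Let a, b ∈ ℝ^p be positive vectors, μ ≥ 0, β ≥ 0, and let F(μ; x) = Σ_{n≥0} [(a+μ)_n / (b+μ)_n] x^n / n! (where (c)_n is the componentwise product of Pochhammer symbols). Then the Wronskian-type expression F(μ+β; x) F'(μ; x) − F(μ; x) F'(μ+β; x) (derivatives with respect to x) has power series coefficients c_{m−1} = (1/m!) Σ_{0 ≤ k ≤ m/2} C(m,k)(m−2k) [ (a+μ+β)_k (a+μ)_{m−k} / ((b+μ+β)_k (b+μ)_{m−k}) − (a+μ)_k (a+μ+β)_{m−k} / ((b+μ)_k (b+μ+β)_{m−k}) ] for m ≥ 1. -/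
open Finset

/-- The vector Pochhammer product `(a + x)_n = ∏_{i<p} (a_i + x)_n`. -/
noncomputable def pochVec (p : ℕ) (a : ℕ → ℝ) (x : ℝ) (n : ℕ) : ℝ :=
  ∏ i ∈ Finset.range p, (ascPochhammer ℝ n).eval (a i + x)

/-- `F(μ; x) = Σ_{n≥0} (a+μ)_n/(b+μ)_n · xⁿ/n!`. -/
noncomputable def Fμ (p : ℕ) (a b : ℕ → ℝ) (μ x : ℝ) : ℝ :=
  ∑' n : ℕ, pochVec p a μ n / pochVec p b μ n * x ^ n / n.factorial

lemma asc_ratio_le (y z : ℝ) (hy : 0 < y) (hz : 0 < z) (n : ℕ) :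
    (ascPochhammer ℝ n).eval y / (ascPochhammer ℝ n).eval z ≤ max 1 (y / z) ^ n := by
  induction n with
  | zero => simp
  | succ n ih =>
    have hpy := ascPochhammer_pos n y hy
    have hpz := ascPochhammer_pos n z hz
    have hM1 : (1:ℝ) ≤ max 1 (y/z) := le_max_left _ _
    have hMz : y ≤ max 1 (y/z) * z := by
      have := le_max_right 1 (y/z)
      calc y = y / z * z := by field_simp
        _ ≤ max 1 (y/z) * z := by nlinarith
    have hfac : (y + n) / (z + n) ≤ max 1 (y/z) := by
      rw [div_le_iff₀ (by positivity)]
      have : (0:ℝ) ≤ n := Nat.cast_nonneg n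
      nlinarith
    rw [ascPochhammer_succ_eval, ascPochhammer_succ_eval, pow_succ]
    have heq : (ascPochhammer ℝ n).eval y * (y + n) / ((ascPochhammer ℝ n).eval z * (z + n))
        = ((ascPochhammer ℝ n).eval y / (ascPochhammer ℝ n).eval z) * ((y + n) / (z + n)) := by
      field_simp
    rw [heq]
    apply mul_le_mul ih hfac (by positivity) (by positivity)

lemma pochVec_pos {p : ℕ} {c : ℕ → ℝ} (hc : ∀ i < p, 0 < c i) {x : ℝ} (hx : 0 ≤ x) (n : ℕ) :
    0 < pochVec p c x n := by
  apply Finset.prod_pos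
  intro i hi
  exact ascPochhammer_pos n _ (by have := hc i (mem_range.mp hi); linarith)

lemma pochVec_ratio_le {p : ℕ} {a b : ℕ → ℝ} (ha : ∀ i < p, 0 < a i) (hb : ∀ i < p, 0 < b i)
    {x : ℝ} (hx : 0 ≤ x) (n : ℕ) :
    pochVec p a x n / pochVec p b x n ≤ (∏ i ∈ range p, max 1 ((a i + x) / (b i + x))) ^ n := by
  rw [pochVec, pochVec, ← Finset.prod_div_distrib, ← Finset.prod_pow]
  apply Finset.prod_le_prod
  · intro i hi
    have h1 := ascPochhammer_pos n (a i + x) (by have := ha i (mem_range.mp hi); linarith)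
    have h2 := ascPochhammer_pos n (b i + x) (by have := hb i (mem_range.mp hi); linarith)
    positivity
  · intro i hi
    exact asc_ratio_le _ _ (by have := ha i (mem_range.mp hi); linarith)
      (by have := hb i (mem_range.mp hi); linarith) n

lemma summable_norm_series {A : ℕ → ℝ} {C D : ℝ} (hC : 0 ≤ C) (hD : 0 ≤ D)
    (hA : ∀ n, |A n| ≤ D * C ^ n) (x : ℝ) :
    Summable (fun n => ‖A n * x ^ n / n.factorial‖) := by
  apply Summable.of_nonneg_of_le (fun n => norm_nonneg _) (fun n => ?_)
    ((Real.summable_pow_div_factorial (C * |x|)).mul_left D)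
  have h1 : ‖A n * x ^ n / n.factorial‖ = |A n| * |x| ^ n / n.factorial := by
    rw [Real.norm_eq_abs, abs_div, abs_mul, abs_pow, Nat.abs_cast]
  rw [h1, mul_pow]
  calc |A n| * |x| ^ n / n.factorial = |A n| * (|x| ^ n / n.factorial) := by ring
    _ ≤ (D * C ^ n) * (|x| ^ n / n.factorial) :=
        mul_le_mul_of_nonneg_right (hA n) (by positivity)
    _ = D * (C ^ n * |x| ^ n / n.factorial) := by ring

lemma summable_series {A : ℕ → ℝ} {C D : ℝ} (hC : 0 ≤ C) (hD : 0 ≤ D)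
    (hA : ∀ n, |A n| ≤ D * C ^ n) (x : ℝ) :
    Summable (fun n => A n * x ^ n / n.factorial) :=
  (summable_norm_series hC hD hA x).of_norm

lemma hasDerivAt_series {A : ℕ → ℝ} {C : ℝ} (hC : 1 ≤ C) (hA : ∀ n, |A n| ≤ C ^ n) (x : ℝ) :
    HasDerivAt (fun y => ∑' n, A n * y ^ n / n.factorial)
      (∑' n, A (n + 1) * x ^ n / n.factorial) x := by
  have hC0 : (0:ℝ) ≤ C := by linarith
  set R : ℝ := |x| + 1 with hR
  have hR0 : 0 < R := by positivity
  set u : ℕ → ℝ := fun n => C ^ n * n * R ^ (n - 1) / n.factorial with hu_def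
  have hu : Summable u := by
    apply (_root_.summable_nat_add_iff 1).mp
    have : (fun n => u (n + 1)) = fun n => C * ((C * R) ^ n / n.factorial) := by
      funext n
      simp only [hu_def]
      rw [Nat.add_sub_cancel, Nat.factorial_succ, mul_pow]
      push_cast
      have h1 : (n.factorial : ℝ) ≠ 0 := by positivity
      field_simp
      ring
    rw [this]
    exact (Real.summable_pow_div_factorial (C * R)).mul_left C
  have key := hasDerivAt_tsum_of_isPreconnected (y₀ := x) (y := x) hu (isOpen_Ioo (a := -R) (b := R))
    (isPreconnected_Ioo)
    (g := fun n y => A n * y ^ n / n.factorial)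
    (g' := fun n y => A n * (n * y ^ (n - 1)) / n.factorial)
    (fun n y _ => by
      have := (hasDerivAt_pow n y).const_mul (A n)
      exact this.div_const _)
    (fun n y hy => by
      have hyR : |y| ≤ R := by
        rw [abs_le]; constructor <;> [linarith [hy.1]; linarith [hy.2]]
      have h1 : ‖A n * (n * y ^ (n - 1)) / n.factorial‖
          = |A n| * (n * |y| ^ (n - 1)) / n.factorial := by
        rw [Real.norm_eq_abs, abs_div, abs_mul, abs_mul, abs_pow, Nat.abs_cast, Nat.abs_cast]
      rw [h1, hu_def]
      simp only
      have h2 : C ^ n * (n:ℝ) * R ^ (n - 1) / n.factorial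
          = C ^ n * ((n:ℝ) * R ^ (n - 1)) / n.factorial := by ring
      rw [h2]
      gcongr <;> first | exact hA n | exact abs_nonneg y | exact hyR)
    (Set.mem_Ioo.mpr ⟨by linarith [abs_nonneg x, neg_abs_le x], by linarith [le_abs_self x]⟩)
    (summable_series hC0 zero_le_one (by simpa using hA) x)
    (Set.mem_Ioo.mpr ⟨by linarith [abs_nonneg x, neg_abs_le x], by linarith [le_abs_self x]⟩)
  have hxR : |x| ≤ R := by rw [hR]; linarith
  have hsum' : Summable (fun n => A n * (n * x ^ (n - 1)) / n.factorial) := by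
    apply Summable.of_norm_bounded hu
    intro n
    have h1 : ‖A n * (↑n * x ^ (n - 1)) / ↑n.factorial‖
        = |A n| * ((n:ℝ) * |x| ^ (n - 1)) / n.factorial := by
      rw [Real.norm_eq_abs, abs_div, abs_mul, abs_mul, abs_pow, Nat.abs_cast, Nat.abs_cast]
    rw [h1]
    calc |A n| * ((n:ℝ) * |x| ^ (n - 1)) / n.factorial
        ≤ C ^ n * ((n:ℝ) * R ^ (n - 1)) / n.factorial := by
          gcongr <;> first | exact hA n | exact abs_nonneg x | exact hxR
      _ = u n := by simp only [hu_def]; ring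
  rw [show (∑' n, A (n + 1) * x ^ n / n.factorial) = ∑' n, A n * (n * x ^ (n - 1)) / n.factorial from ?_]
  · exact key
  rw [Summable.tsum_eq_zero_add hsum']
  simp only [Nat.cast_zero, zero_mul, mul_zero, zero_div, zero_add]
  apply tsum_congr
  intro n
  rw [Nat.add_sub_cancel, Nat.factorial_succ]
  push_cast
  have h1 : (n.factorial : ℝ) ≠ 0 := by positivity
  field_simp

lemma comb_key (D : ℕ → ℝ) (m : ℕ) (hD : ∀ k ≤ m + 1, D (m + 1 - k) = - D k) :
    ∑ k ∈ range (m + 1), D k / (k.factorial * (m - k).factorial) =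
    1 / ((m + 1).factorial : ℝ) * ∑ k ∈ range ((m + 1) / 2 + 1),
      ((m + 1).choose k : ℝ) * (((m : ℝ) + 1) - 2 * k) * D k := by
  set N := m + 1 with hN
  set g : ℕ → ℝ := fun k => ((N.choose k : ℝ)) * ((N : ℝ) - 2 * k) * D k with hg
  -- Step A : LHS = (1/N!) * ∑_{k ∈ range (N+1)} C(N,k)((N:ℝ)-k) D k
  have stepA : ∑ k ∈ range (m + 1), D k / (k.factorial * (m - k).factorial) =
      1 / (N.factorial : ℝ) * ∑ k ∈ range (N + 1), (N.choose k : ℝ) * ((N : ℝ) - k) * D k := by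
    rw [Finset.sum_range_succ (n := N)]
    have hzero : (N.choose N : ℝ) * ((N : ℝ) - (N : ℝ)) * D N = 0 := by ring
    rw [hzero, add_zero, Finset.mul_sum]
    apply Finset.sum_congr rfl
    intro k hk
    have hkm : k ≤ m := by simpa [Nat.lt_succ_iff] using hk
    have hkN : k ≤ N := by omega
    have h1 : ((N : ℝ) - k) = ((N - k : ℕ) : ℝ) := by
      rw [Nat.cast_sub hkN]
    have keyNat : N.choose k * (N - k) * (k.factorial * (m - k).factorial) = N.factorial := by
      have h3 : N - k = (m - k) + 1 := by omega
      have h4 := Nat.choose_mul_factorial_mul_factorial hkN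
      calc N.choose k * (N - k) * (k.factorial * (m - k).factorial)
          = N.choose k * k.factorial * ((N - k) * (m - k).factorial) := by ring
        _ = N.choose k * k.factorial * (N - k).factorial := by
            rw [h3, Nat.factorial_succ]
        _ = N.factorial := h4
    have keyR : ((N.choose k : ℝ)) * ((N - k : ℕ) : ℝ) *
        ((k.factorial : ℝ) * ((m - k).factorial : ℝ)) = (N.factorial : ℝ) := by
      exact_mod_cast congrArg (Nat.cast : ℕ → ℝ) keyNat
    have f1 : (k.factorial : ℝ) ≠ 0 := by positivity
    have f2 : ((m - k).factorial : ℝ) ≠ 0 := by positivity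
    have hNfac : ((N.factorial : ℝ))⁻¹ * (N.factorial : ℝ) = 1 := by
      rw [inv_mul_cancel₀]; positivity
    rw [h1, div_eq_iff (mul_ne_zero f1 f2), one_div]
    linear_combination (-(((N.factorial : ℝ))⁻¹ * D k)) * keyR + (-(D k)) * hNfac
  -- Step B : reflection identity
  have reflect : ∑ k ∈ range (N + 1), (N.choose k : ℝ) * (k : ℝ) * D k =
      - ∑ k ∈ range (N + 1), (N.choose k : ℝ) * ((N : ℝ) - k) * D k := by
    have h := Finset.sum_range_reflect (fun k => (N.choose k : ℝ) * (k : ℝ) * D k) (N + 1)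
    rw [← h, ← Finset.sum_neg_distrib]
    apply Finset.sum_congr rfl
    intro k hk
    have hkN : k ≤ N := by simpa [Nat.lt_succ_iff] using hk
    have e1 : N + 1 - 1 - k = N - k := by omega
    rw [e1, Nat.choose_symm hkN, Nat.cast_sub hkN, hD k hkN]
    ring
  have stepB : ∑ k ∈ range (N + 1), g k =
      2 * ∑ k ∈ range (N + 1), (N.choose k : ℝ) * ((N : ℝ) - k) * D k := by
    have expand : ∀ k, g k = (N.choose k : ℝ) * ((N : ℝ) - k) * D k
        - (N.choose k : ℝ) * (k : ℝ) * D k := by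
      intro k; simp only [hg]; ring
    rw [Finset.sum_congr rfl (fun k _ => expand k), Finset.sum_sub_distrib, reflect]
    ring
  -- Step C : folding the symmetric sum
  have hgsymm : ∀ k ≤ N, g (N - k) = g k := by
    intro k hk
    simp only [hg]
    rw [Nat.choose_symm hk, Nat.cast_sub hk, hD k hk]
    ring
  have stepC : ∑ k ∈ range (N + 1), g k = 2 * ∑ k ∈ range (N / 2 + 1), g k := by
    have hsplit := Finset.sum_range_add_sum_Ico g (show N / 2 + 1 ≤ N + 1 by omega)
    have hIco : ∑ k ∈ Finset.Ico (N / 2 + 1) (N + 1), g k = ∑ k ∈ range (N - N / 2), g k := by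
      apply Finset.sum_nbij' (fun k => N - k) (fun j => N - j)
      · intro k hk
        simp only [Finset.mem_Ico] at hk
        simp only [Finset.mem_range]
        omega
      · intro j hj
        simp only [Finset.mem_range] at hj
        simp only [Finset.mem_Ico]
        omega
      · intro k hk
        simp only [Finset.mem_Ico] at hk
        omega
      · intro j hj
        simp only [Finset.mem_range] at hj
        omega
      · intro k hk
        simp only [Finset.mem_Ico] at hk
        have : N - (N - k) = k := by omega
        rw [← hgsymm (N - k) (by omega), this]
    have hsub : ∑ k ∈ range (N - N / 2), g k = ∑ k ∈ range (N / 2 + 1), g k := by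
      apply Finset.sum_subset
      · intro k hk
        simp only [Finset.mem_range] at hk ⊢
        omega
      · intro k hk1 hk2
        simp only [Finset.mem_range] at hk1 hk2
        have hNk : N = 2 * k := by omega
        simp only [hg]
        have : ((N : ℝ) - 2 * k) = 0 := by
          rw [hNk]; push_cast; ring
        rw [this]; ring
    rw [← hsplit, hIco, hsub]; ring
  rw [stepA]
  have : ∑ k ∈ range (N / 2 + 1), g k = ∑ k ∈ range (N + 1), (N.choose k : ℝ) * ((N : ℝ) - k) * D k := by
    have h2 : (2:ℝ) ≠ 0 := two_ne_zero
    have := stepC.symm.trans stepB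
    linarith
  have hfin : ∑ k ∈ range ((m + 1) / 2 + 1), ((m + 1).choose k : ℝ) * (((m : ℝ) + 1) - 2 * k) * D k
      = ∑ k ∈ range (N / 2 + 1), g k := by
    apply Finset.sum_congr rfl
    intro k _
    simp only [hg, hN]
    push_cast
    ring
  rw [hfin, this]

theorem stmt_10 (p : ℕ) (a b : ℕ → ℝ)
    (ha : ∀ i < p, 0 < a i) (hb : ∀ i < p, 0 < b i)
    (μ β : ℝ) (hμ : 0 ≤ μ) (hβ : 0 ≤ β) (x : ℝ) :
    Fμ p a b (μ + β) x * deriv (Fμ p a b μ) x -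
      Fμ p a b μ x * deriv (Fμ p a b (μ + β)) x =
    ∑' m : ℕ,
      (1 / ((m + 1).factorial : ℝ) *
        ∑ k ∈ Finset.range ((m + 1) / 2 + 1),
          ((m + 1).choose k : ℝ) * (((m : ℝ) + 1) - 2 * k) *
            (pochVec p a (μ + β) k * pochVec p a μ (m + 1 - k) /
                (pochVec p b (μ + β) k * pochVec p b μ (m + 1 - k)) -
              pochVec p a μ k * pochVec p a (μ + β) (m + 1 - k) /
                (pochVec p b μ k * pochVec p b (μ + β) (m + 1 - k)))) * x ^ m := by
  have hμβ : 0 ≤ μ + β := by linarith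
  set A : ℕ → ℝ := fun n => pochVec p a μ n / pochVec p b μ n with hA_def
  set B : ℕ → ℝ := fun n => pochVec p a (μ + β) n / pochVec p b (μ + β) n with hB_def
  set C₁ : ℝ := ∏ i ∈ range p, max 1 ((a i + μ) / (b i + μ)) with hC₁_def
  set C₂ : ℝ := ∏ i ∈ range p, max 1 ((a i + (μ + β)) / (b i + (μ + β))) with hC₂_def
  have hC₁ : 1 ≤ C₁ := by
    calc (1:ℝ) = ∏ _i ∈ range p, (1:ℝ) := by simp
      _ ≤ C₁ := Finset.prod_le_prod (fun i _ => zero_le_one) (fun i _ => le_max_left _ _)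
  have hC₂ : 1 ≤ C₂ := by
    calc (1:ℝ) = ∏ _i ∈ range p, (1:ℝ) := by simp
      _ ≤ C₂ := Finset.prod_le_prod (fun i _ => zero_le_one) (fun i _ => le_max_left _ _)
  set C : ℝ := max C₁ C₂ with hC_def
  have hC : 1 ≤ C := le_trans hC₁ (le_max_left _ _)
  have hC0 : (0:ℝ) ≤ C := by linarith
  have hApos : ∀ n, 0 < A n := fun n =>
    div_pos (pochVec_pos ha hμ n) (pochVec_pos hb hμ n)
  have hBpos : ∀ n, 0 < B n := fun n =>
    div_pos (pochVec_pos ha hμβ n) (pochVec_pos hb hμβ n)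
  have hAbound : ∀ n, |A n| ≤ C ^ n := by
    intro n
    rw [abs_of_pos (hApos n)]
    calc A n ≤ C₁ ^ n := pochVec_ratio_le ha hb hμ n
      _ ≤ C ^ n := pow_le_pow_left₀ (by linarith) (le_max_left _ _) n
  have hBbound : ∀ n, |B n| ≤ C ^ n := by
    intro n
    rw [abs_of_pos (hBpos n)]
    calc B n ≤ C₂ ^ n := pochVec_ratio_le ha hb hμβ n
      _ ≤ C ^ n := pow_le_pow_left₀ (by linarith) (le_max_right _ _) n
  have hAbound' : ∀ n, |A (n + 1)| ≤ C * C ^ n := by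
    intro n; rw [← pow_succ']; exact hAbound (n + 1)
  have hBbound' : ∀ n, |B (n + 1)| ≤ C * C ^ n := by
    intro n; rw [← pow_succ']; exact hBbound (n + 1)
  have hFμx : Fμ p a b μ x = ∑' n, A n * x ^ n / n.factorial := rfl
  have hFβx : Fμ p a b (μ + β) x = ∑' n, B n * x ^ n / n.factorial := rfl
  have hFμ : Fμ p a b μ = fun y => ∑' n, A n * y ^ n / n.factorial := rfl
  have hFβ : Fμ p a b (μ + β) = fun y => ∑' n, B n * y ^ n / n.factorial := rfl
  have hderivA : deriv (Fμ p a b μ) x = ∑' n, A (n + 1) * x ^ n / n.factorial := by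
    rw [hFμ]; exact (hasDerivAt_series hC hAbound x).deriv
  have hderivB : deriv (Fμ p a b (μ + β)) x = ∑' n, B (n + 1) * x ^ n / n.factorial := by
    rw [hFβ]; exact (hasDerivAt_series hC hBbound x).deriv
  have hone : ∀ n : ℕ, |A n| ≤ 1 * C ^ n := by intro n; rw [one_mul]; exact hAbound n
  have hone' : ∀ n : ℕ, |B n| ≤ 1 * C ^ n := by intro n; rw [one_mul]; exact hBbound n
  have sA : Summable fun n => ‖A n * x ^ n / n.factorial‖ :=
    summable_norm_series hC0 zero_le_one hone x
  have sB : Summable fun n => ‖B n * x ^ n / n.factorial‖ :=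
    summable_norm_series hC0 zero_le_one hone' x
  have sA' : Summable fun n => ‖A (n + 1) * x ^ n / n.factorial‖ :=
    summable_norm_series hC0 hC0 hAbound' x
  have sB' : Summable fun n => ‖B (n + 1) * x ^ n / n.factorial‖ :=
    summable_norm_series hC0 hC0 hBbound' x
  have prod1 : Fμ p a b (μ + β) x * deriv (Fμ p a b μ) x =
      ∑' n, ∑ k ∈ range (n + 1),
        (B k * x ^ k / k.factorial) * (A (n - k + 1) * x ^ (n - k) / (n - k).factorial) := by
    rw [hFβx, hderivA]
    exact tsum_mul_tsum_eq_tsum_sum_range_of_summable_norm sB sA'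
  have prod2 : Fμ p a b μ x * deriv (Fμ p a b (μ + β)) x =
      ∑' n, ∑ k ∈ range (n + 1),
        (A k * x ^ k / k.factorial) * (B (n - k + 1) * x ^ (n - k) / (n - k).factorial) := by
    rw [hFμx, hderivB]
    exact tsum_mul_tsum_eq_tsum_sum_range_of_summable_norm sA sB'
  have s1 : Summable fun n => ∑ k ∈ range (n + 1),
      (B k * x ^ k / k.factorial) * (A (n - k + 1) * x ^ (n - k) / (n - k).factorial) :=
    (summable_norm_sum_mul_range_of_summable_norm sB sA').of_norm
  have s2 : Summable fun n => ∑ k ∈ range (n + 1),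
      (A k * x ^ k / k.factorial) * (B (n - k + 1) * x ^ (n - k) / (n - k).factorial) :=
    (summable_norm_sum_mul_range_of_summable_norm sA sB').of_norm
  rw [prod1, prod2, ← Summable.tsum_sub s1 s2]
  apply tsum_congr
  intro m
  set D : ℕ → ℝ := fun k => B k * A (m + 1 - k) - A k * B (m + 1 - k) with hD_def
  have hD : ∀ k ≤ m + 1, D (m + 1 - k) = - D k := by
    intro k hk
    simp only [hD_def]
    have e : m + 1 - (m + 1 - k) = k := by omega
    rw [e]; ring
  have step1 : ∑ k ∈ range (m + 1),
        (B k * x ^ k / k.factorial) * (A (m - k + 1) * x ^ (m - k) / (m - k).factorial) -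
      ∑ k ∈ range (m + 1),
        (A k * x ^ k / k.factorial) * (B (m - k + 1) * x ^ (m - k) / (m - k).factorial) =
      (∑ k ∈ range (m + 1), D k / (k.factorial * (m - k).factorial)) * x ^ m := by
    rw [← Finset.sum_sub_distrib, Finset.sum_mul]
    apply Finset.sum_congr rfl
    intro k hk
    have hkm : k ≤ m := by simpa [Nat.lt_succ_iff] using hk
    have e1 : m - k + 1 = m + 1 - k := by omega
    have e2 : x ^ k * x ^ (m - k) = x ^ m := by
      rw [← pow_add]; congr 1; omega
    rw [e1]
    calc (B k * x ^ k / k.factorial) * (A (m + 1 - k) * x ^ (m - k) / (m - k).factorial) -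
          (A k * x ^ k / k.factorial) * (B (m + 1 - k) * x ^ (m - k) / (m - k).factorial)
        = (B k * A (m + 1 - k) - A k * B (m + 1 - k)) / (k.factorial * (m - k).factorial) *
            (x ^ k * x ^ (m - k)) := by ring
      _ = D k / (k.factorial * (m - k).factorial) * x ^ m := by rw [e2]
  rw [step1, comb_key D m hD]
  congr 2
  apply Finset.sum_congr rfl
  intro k _
  simp only [hD_def, hA_def, hB_def]
  rw [div_mul_div_comm, div_mul_div_comm]
end
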